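/- arXiv:2207.14692 — 7 statements merged into one kernel-verified Lean document; each statement's English description precedes it below -/
import Mathlib

section
/- Let d ≥ 2 and let f be a probability mass function on {0,1}^d whose one-dimensional marginals are symmetric Bernoulli (each coordinate equals 1 with probability 1/2). For every subset J ⊆ {1,...,d} with |J| ≥ 2 define θ_J = (−2)^{|J|} Σ_{i∈{0,1}^d} f(i) ∏_{j∈J}(i_j − 1/2). Then for all u = (u_1,...,u_d) ∈ [0,1]^d, Σ_{i∈{0,1}^d} f(i) ∏_{k=1}^d [(1−i_k)(2u_k − u_k^2) + i_k u_k^2] = (∏_{k=1}^d u_k) · (1 + Σ_{J⊆{1,...,d}, |J|≥2} θ_J ∏_{j∈J}(1−u_j)). -/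
open Finset

/-- Theorem 2.1: stochastic representation of FGM copulas via
symmetric multivariate Bernoulli vectors. -/
theorem fgm_copula_bernoulli_representation (d : ℕ) (hd : 2 ≤ d)
    (f : (Fin d → Fin 2) → ℝ)
    (hf_nonneg : ∀ i, 0 ≤ f i)
    (hf_sum : ∑ i : Fin d → Fin 2, f i = 1)
    (hf_marg : ∀ j : Fin d,
      ∑ i ∈ Finset.univ.filter (fun i : Fin d → Fin 2 => i j = 1), f i = 1 / 2)
    (θ : Finset (Fin d) → ℝ)
    (hθ : ∀ J : Finset (Fin d), 2 ≤ J.card →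
      θ J = (-2 : ℝ) ^ J.card *
        ∑ i : Fin d → Fin 2, f i * ∏ j ∈ J, (((i j : ℕ) : ℝ) - 1 / 2))
    (u : Fin d → ℝ) (hu : ∀ k, u k ∈ Set.Icc (0 : ℝ) 1) :
    ∑ i : Fin d → Fin 2, f i *
        ∏ k, ((1 - ((i k : ℕ) : ℝ)) * (2 * u k - u k ^ 2) + ((i k : ℕ) : ℝ) * u k ^ 2)
      = (∏ k, u k) *
        (1 + ∑ J ∈ Finset.univ.filter (fun J : Finset (Fin d) => 2 ≤ J.card),
          θ J * ∏ j ∈ J, (1 - u j)) := by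
  classical
  set T : Finset (Fin d) → ℝ :=
    fun J => ∑ i : Fin d → Fin 2, f i * ∏ j ∈ J, (1 - 2 * ((i j : ℕ) : ℝ)) with hT
  have hT0 : T ∅ = 1 := by simp [hT, hf_sum]
  have hkey : ∀ j : Fin d, ∑ i : Fin d → Fin 2, f i * ((i j : ℕ) : ℝ) = 1 / 2 := by
    intro j
    rw [← Finset.sum_filter_add_sum_filter_not Finset.univ (fun i : Fin d → Fin 2 => i j = 1)]
    have h1 : ∑ i ∈ Finset.univ.filter (fun i : Fin d → Fin 2 => i j = 1),
        f i * ((i j : ℕ) : ℝ) = 1 / 2 := by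
      rw [← hf_marg j]
      refine Finset.sum_congr rfl fun i hi => ?_
      simp only [Finset.mem_filter] at hi
      rw [hi.2]; norm_num
    have h2 : ∑ i ∈ Finset.univ.filter (fun i : Fin d → Fin 2 => ¬ i j = 1),
        f i * ((i j : ℕ) : ℝ) = 0 := by
      refine Finset.sum_eq_zero fun i hi => ?_
      simp only [Finset.mem_filter] at hi
      have h0 : i j = 0 := by
        have hlt := (i j).isLt
        rw [Fin.ext_iff] at hi ⊢
        simp only [Fin.val_one, Fin.val_zero] at *
        omega
      rw [h0]; norm_num
    rw [h1, h2]; ring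
  have hT1 : ∀ j : Fin d, T {j} = 0 := by
    intro j
    have h : T {j} = (∑ i : Fin d → Fin 2, f i)
        - 2 * ∑ i : Fin d → Fin 2, f i * ((i j : ℕ) : ℝ) := by
      simp only [hT, Finset.prod_singleton]
      rw [Finset.mul_sum, ← Finset.sum_sub_distrib]
      exact Finset.sum_congr rfl fun i _ => by ring
    rw [h, hf_sum, hkey j]; ring
  have hTθ : ∀ J : Finset (Fin d), 2 ≤ J.card → θ J = T J := by
    intro J hJ
    rw [hθ J hJ]
    simp only [hT]
    rw [Finset.mul_sum]
    refine Finset.sum_congr rfl fun i _ => ?_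
    have : (-2 : ℝ) ^ J.card * (f i * ∏ j ∈ J, (((i j : ℕ) : ℝ) - 1 / 2))
        = f i * ((∏ _j ∈ J, (-2 : ℝ)) * ∏ j ∈ J, (((i j : ℕ) : ℝ) - 1 / 2)) := by
      rw [Finset.prod_const]; ring
    rw [this, ← Finset.prod_mul_distrib]
    exact congrArg (f i * ·) (Finset.prod_congr rfl fun j _ => by ring)
  have hfac : ∀ i : Fin d → Fin 2,
      (∏ k, ((1 - ((i k : ℕ) : ℝ)) * (2 * u k - u k ^ 2) + ((i k : ℕ) : ℝ) * u k ^ 2))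
      = (∏ k, u k) * ∑ J : Finset (Fin d),
          (∏ j ∈ J, (1 - u j)) * ∏ j ∈ J, (1 - 2 * ((i j : ℕ) : ℝ)) := by
    intro i
    have step1 : (∏ k, ((1 - ((i k : ℕ) : ℝ)) * (2 * u k - u k ^ 2) + ((i k : ℕ) : ℝ) * u k ^ 2))
        = (∏ k, u k) * ∏ k, ((1 - u k) * (1 - 2 * ((i k : ℕ) : ℝ)) + 1) := by
      rw [← Finset.prod_mul_distrib]
      exact Finset.prod_congr rfl fun k _ => by ring
    rw [step1, Finset.prod_add]
    congr 1
    rw [← Finset.powerset_univ]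
    refine Finset.sum_congr rfl fun J hJ => ?_
    rw [Finset.prod_mul_distrib]
    simp
  have hmain : ∑ i : Fin d → Fin 2, f i *
      ∏ k, ((1 - ((i k : ℕ) : ℝ)) * (2 * u k - u k ^ 2) + ((i k : ℕ) : ℝ) * u k ^ 2)
      = (∏ k, u k) * ∑ J : Finset (Fin d), (∏ j ∈ J, (1 - u j)) * T J := by
    have lhs_eq : ∑ i : Fin d → Fin 2, f i *
        ∏ k, ((1 - ((i k : ℕ) : ℝ)) * (2 * u k - u k ^ 2) + ((i k : ℕ) : ℝ) * u k ^ 2)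
        = ∑ i : Fin d → Fin 2, ∑ J : Finset (Fin d),
            (∏ k, u k) * (∏ j ∈ J, (1 - u j)) * (f i * ∏ j ∈ J, (1 - 2 * ((i j : ℕ) : ℝ))) := by
      refine Finset.sum_congr rfl fun i _ => ?_
      rw [hfac i, Finset.mul_sum, Finset.mul_sum]
      exact Finset.sum_congr rfl fun J _ => by ring
    have rhs_eq : (∏ k, u k) * ∑ J : Finset (Fin d), (∏ j ∈ J, (1 - u j)) * T J
        = ∑ J : Finset (Fin d), ∑ i : Fin d → Fin 2,
            (∏ k, u k) * (∏ j ∈ J, (1 - u j)) * (f i * ∏ j ∈ J, (1 - 2 * ((i j : ℕ) : ℝ))) := by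
      rw [Finset.mul_sum]
      refine Finset.sum_congr rfl fun J _ => ?_
      simp only [hT]
      rw [Finset.mul_sum, Finset.mul_sum]
      exact Finset.sum_congr rfl fun i _ => by ring
    rw [lhs_eq, rhs_eq, Finset.sum_comm]
  rw [hmain]
  congr 1
  rw [← Finset.sum_filter_add_sum_filter_not Finset.univ
    (fun J : Finset (Fin d) => 2 ≤ J.card)]
  have hsmall : ∑ J ∈ Finset.univ.filter (fun J : Finset (Fin d) => ¬ 2 ≤ J.card),
      (∏ j ∈ J, (1 - u j)) * T J = 1 := by
    rw [Finset.sum_eq_single (∅ : Finset (Fin d))]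
    · simp [hT0]
    · intro J hJ hne
      simp only [Finset.mem_filter] at hJ
      have hc : J.card = 1 := by
        have h0 : J.card ≠ 0 := fun h => hne (Finset.card_eq_zero.mp h)
        omega
      obtain ⟨j, rfl⟩ := Finset.card_eq_one.mp hc
      rw [hT1 j, mul_zero]
    · intro h
      exact absurd (Finset.mem_filter.mpr ⟨Finset.mem_univ _, by simp⟩) h
  have hbig : ∑ J ∈ Finset.univ.filter (fun J : Finset (Fin d) => 2 ≤ J.card),
      (∏ j ∈ J, (1 - u j)) * T J
      = ∑ J ∈ Finset.univ.filter (fun J : Finset (Fin d) => 2 ≤ J.card),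
          θ J * ∏ j ∈ J, (1 - u j) := by
    refine Finset.sum_congr rfl fun J hJ => ?_
    simp only [Finset.mem_filter] at hJ
    rw [hTθ J hJ.2]; ring
  rw [hsmall, hbig]; ring
end

section
/- Consider the FGM construction: on a probability space, let I : Ω → {0,1}^d be a random vector and for j ∈ {1,2} let X^[j] = (X^[j]_1,...,X^[j]_d) be random vectors such that the 2d+1 random elements I, X^[1]_1,...,X^[1]_d, X^[2]_1,...,X^[2]_d are mutually independent, where for given cdfs F_1,...,F_d the rv X^[1]_k has cdf x ↦ 1−(1−F_k(x))^2 and X^[2]_k has cdf x ↦ F_k(x)^2; set X_k = (1−I_k)X^[1]_k + I_k X^[2]_k for k = 1,...,d. Then for all (x_1,...,x_d) ∈ ℝ^d, P(X_1 ≤ x_1, ..., X_d ≤ x_d) = Σ_{i∈{0,1}^d} P(I = i) ∏_{k=1}^d [(1−i_k)(1−(1−F_k(x_k))^2) + i_k F_k(x_k)^2]. In particular each X_k has marginal cdf F_k. -/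
/-!
On the event `{I = i}` the `k`-th coordinate of the construction is `X^[i_k]_k`, so the joint
cdf splits over the values of `I`, and mutual independence factors each piece into
`P(I = i)` times the cdfs of the selected components. For a single coordinate `I_k` is a
fair coin choosing between the minimum and the maximum, and
`((1 - (1 - F)²) + F²) / 2 = F`.
-/

open MeasureTheory ProbabilityTheory

/-- Codomains of the `2d+1` random elements in the FGM construction: the symmetric
Bernoulli vector `I` (index `none`) and the `2d` order-statistic components (index
`some (k, j)`, where `j = 0` is the minimum and `j = 1` the maximum). -/
def fgmType (d : ℕ) : Option (Fin d × Fin 2) → Type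
  | none => Fin d → Fin 2
  | some _ => ℝ

instance fgmTypeMeasurableSpace (d : ℕ) (o : Option (Fin d × Fin 2)) :
    MeasurableSpace (fgmType d o) := by
  cases o with
  | none => exact (inferInstance : MeasurableSpace (Fin d → Fin 2))
  | some p => exact (inferInstance : MeasurableSpace ℝ)

/-- The family consisting of the Bernoulli random vector `I` together with the `2d`
order-statistic components `X j k`. -/
def fgmFamily {Ω : Type*} (d : ℕ) (I : Ω → Fin d → Fin 2)
    (X : Fin 2 → Fin d → Ω → ℝ) : (o : Option (Fin d × Fin 2)) → Ω → fgmType d o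
  | none => I
  | some p => X p.2 p.1

lemma one_sub_val_mul_add_val_mul (b : Fin 2) (y : Fin 2 → ℝ) :
    (1 - ((b : ℕ) : ℝ)) * y 0 + ((b : ℕ) : ℝ) * y 1 = y b := by
  fin_cases b <;> simp

lemma measureReal_setOf_mem_eq_sum_inter {Ω κ : Type*} [MeasurableSpace Ω] [Fintype κ]
    [MeasurableSpace κ] [MeasurableSingletonClass κ] (μ : Measure Ω) [IsFiniteMeasure μ]
    {J : Ω → κ} (hJ : Measurable J) {E : κ → Set Ω} (hE : ∀ c, MeasurableSet (E c)) :
    μ.real {ω | ω ∈ E (J ω)} = ∑ c, μ.real (J ⁻¹' {c} ∩ E c) := by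
  have hunion : {ω | ω ∈ E (J ω)} = ⋃ c, J ⁻¹' {c} ∩ E c := by
    ext ω; simp
  rw [hunion, measureReal_iUnion_fintype _ fun c => (hJ (measurableSet_singleton c)).inter (hE c)]
  exact fun c c' hcc' => Set.disjoint_left.2 fun ω hc hc' => hcc' (hc.1.symm.trans hc'.1)

lemma ProbabilityTheory.IndepFun.measureReal_inter_preimage_eq_mul {Ω β γ : Type*}
    [MeasurableSpace Ω] [MeasurableSpace β] [MeasurableSpace γ] {μ : Measure Ω}
    {f : Ω → β} {g : Ω → γ} (h : IndepFun f g μ) {s : Set β} {t : Set γ}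
    (hs : MeasurableSet s) (ht : MeasurableSet t) :
    μ.real (f ⁻¹' s ∩ g ⁻¹' t) = μ.real (f ⁻¹' s) * μ.real (g ⁻¹' t) := by
  simp only [measureReal_def, h.measure_inter_preimage_eq_mul s t hs ht, ENNReal.toReal_mul]

lemma measureReal_setOf_select_mem_of_fair_coin {Ω : Type*} [MeasurableSpace Ω]
    (μ : Measure Ω) [IsProbabilityMeasure μ] {B : Ω → Fin 2} (hB : Measurable B)
    {Y : Fin 2 → Ω → ℝ} (hY : ∀ b, Measurable (Y b)) (hindep : ∀ b, IndepFun B (Y b) μ)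
    (hfair : μ.real (B ⁻¹' {1}) = 1 / 2) {s : Set ℝ} (hs : MeasurableSet s) :
    μ.real {ω | Y (B ω) ω ∈ s} = (μ.real (Y 0 ⁻¹' s) + μ.real (Y 1 ⁻¹' s)) / 2 := by
  have hfair' : μ.real (B ⁻¹' {0}) = 1 / 2 := by
    have hcompl : B ⁻¹' {0} = (B ⁻¹' {1})ᶜ := by
      ext ω
      simp only [Set.mem_preimage, Set.mem_singleton_iff, Set.mem_compl_iff]
      omega
    rw [hcompl, probReal_compl_eq_one_sub (hB (measurableSet_singleton 1)), hfair]
    norm_num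
  change μ.real {ω | ω ∈ Y (B ω) ⁻¹' s} = _
  rw [measureReal_setOf_mem_eq_sum_inter μ hB fun b => hY b hs, Fin.sum_univ_two,
    (hindep 0).measureReal_inter_preimage_eq_mul (measurableSet_singleton 0) hs,
    (hindep 1).measureReal_inter_preimage_eq_mul (measurableSet_singleton 1) hs, hfair, hfair']
  ring

section fgm

variable {Ω : Type*} [MeasurableSpace Ω] (P : Measure Ω) {d : ℕ} {I : Ω → Fin d → Fin 2}
  {X : Fin 2 → Fin d → Ω → ℝ}

lemma measureReal_fgm_inter_eq_mul_prod (hIndep : iIndepFun (fgmFamily d I X) P)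
    (i : Fin d → Fin 2) {t : Set (Fin d → Fin 2)} (ht : MeasurableSet t) {s : Fin d → Set ℝ}
    (hs : ∀ k, MeasurableSet (s k)) :
    P.real (I ⁻¹' t ∩ ⋂ k, X (i k) k ⁻¹' s k)
      = P.real (I ⁻¹' t) * ∏ k, P.real (X (i k) k ⁻¹' s k) := by
  have hselected := hIndep.precomp (g := Option.map fun k => (k, i k))
    (Option.map_injective fun k k' h => congrArg Prod.fst h)
  have h := hselected.measure_inter_preimage_eq_mul Finset.univ
    (sets := fun o => match o with
      | none => t
      | some k => s k)
    (fun o _ => by cases o with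
      | none => exact ht
      | some k => exact hs k)
  simp only [Finset.mem_univ, Set.iInter_true] at h
  rw [Set.iInter_option, Fintype.prod_option] at h
  simp only [measureReal_def, ← ENNReal.toReal_prod, ← ENNReal.toReal_mul]
  exact congrArg ENNReal.toReal h

lemma measureReal_fgm_select_mem_eq_sum [IsFiniteMeasure P] (hI : Measurable I)
    (hX : ∀ j k, Measurable (X j k)) (hIndep : iIndepFun (fgmFamily d I X) P)
    {s : Fin d → Set ℝ} (hs : ∀ k, MeasurableSet (s k)) :
    P.real {ω | ∀ k, X (I ω k) k ω ∈ s k}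
      = ∑ i, P.real (I ⁻¹' {i}) * ∏ k, P.real (X (i k) k ⁻¹' s k) := by
  have hevent :
      {ω | ∀ k, X (I ω k) k ω ∈ s k} = {ω | ω ∈ ⋂ k, X (I ω k) k ⁻¹' s k} := by
    ext; simp
  rw [hevent, measureReal_setOf_mem_eq_sum_inter P hI
    fun i => .iInter fun k => hX (i k) k (hs k)]
  exact Finset.sum_congr rfl fun i _ =>
    measureReal_fgm_inter_eq_mul_prod P hIndep i (measurableSet_singleton i) hs

end fgm

/-- Theorem 2.2: the joint cdf of the FGM construction
`X_k = (1 − I_k)·X^[1]_k + I_k·X^[2]_k`, and the fact that each `X_k` has marginal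
cdf `F_k`. -/
theorem fgm_construction_joint_cdf {Ω : Type*} [MeasurableSpace Ω]
    (P : Measure Ω) [IsProbabilityMeasure P] (d : ℕ) (F : Fin d → ℝ → ℝ)
    (I : Ω → Fin d → Fin 2) (X : Fin 2 → Fin d → Ω → ℝ)
    (hI : Measurable I) (hX : ∀ j k, Measurable (X j k))
    (hIndep : iIndepFun (fgmFamily d I X) P)
    (hmarg : ∀ k : Fin d, P {ω | I ω k = 1} = 1 / 2)
    (hcdf_min : ∀ k x, (P {ω | X 0 k ω ≤ x}).toReal = 1 - (1 - F k x) ^ 2)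
    (hcdf_max : ∀ k x, (P {ω | X 1 k ω ≤ x}).toReal = (F k x) ^ 2) :
    (∀ x : Fin d → ℝ,
      (P {ω | ∀ k, (1 - ((I ω k : ℕ) : ℝ)) * X 0 k ω + ((I ω k : ℕ) : ℝ) * X 1 k ω
          ≤ x k}).toReal
        = ∑ i : Fin d → Fin 2, (P {ω | I ω = i}).toReal *
            ∏ k, ((1 - ((i k : ℕ) : ℝ)) * (1 - (1 - F k (x k)) ^ 2)
              + ((i k : ℕ) : ℝ) * (F k (x k)) ^ 2))
    ∧ (∀ k : Fin d, ∀ x : ℝ,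
        (P {ω | (1 - ((I ω k : ℕ) : ℝ)) * X 0 k ω + ((I ω k : ℕ) : ℝ) * X 1 k ω
            ≤ x}).toReal = F k x) := by
  have hsel : ∀ ω k, (1 - ((I ω k : ℕ) : ℝ)) * X 0 k ω + ((I ω k : ℕ) : ℝ) * X 1 k ω
      = X (I ω k) k ω := fun ω k => one_sub_val_mul_add_val_mul _ fun j => X j k ω
  simp only [hsel]
  refine ⟨fun x => ?_, fun k x => ?_⟩
  · refine (measureReal_fgm_select_mem_eq_sum P hI hX hIndep
      (s := fun k => Set.Iic (x k)) fun k => measurableSet_Iic).trans ?_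
    refine Finset.sum_congr rfl fun i _ => congrArg _ (Finset.prod_congr rfl fun k _ => ?_)
    generalize i k = b
    fin_cases b
    · norm_num
      exact hcdf_min k (x k)
    · norm_num
      exact hcdf_max k (x k)
  · have hindep : ∀ b, IndepFun (fun ω => I ω k) (X b k) P := fun b =>
      (hIndep.indepFun (i := none) (j := some (k, b)) (by simp)).comp
        (measurable_pi_apply k) measurable_id
    have hfair : P.real ((fun ω => I ω k) ⁻¹' {1}) = 1 / 2 := by
      simp [measureReal_def, Set.preimage, hmarg k]
    refine (measureReal_setOf_select_mem_of_fair_coin P hI.eval (fun b => hX b k) hindep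
      hfair (measurableSet_Iic (a := x))).trans ?_
    change ((P {ω | X 0 k ω ≤ x}).toReal + (P {ω | X 1 k ω ≤ x}).toReal) / 2 = F k x
    rw [hcdf_min, hcdf_max]
    ring
end

section
/- Consider the FGM construction with nonnegative marginals: I : Ω → {0,1}^d a random vector and, for j ∈ {1,2}, random vectors X^[j] of nonnegative rvs such that I, X^[1]_1,...,X^[1]_d, X^[2]_1,...,X^[2]_d are mutually independent, X^[1]_k with cdf 1−(1−F_k)^2 and X^[2]_k with cdf F_k^2, and X_k = (1−I_k)X^[1]_k + I_k X^[2]_k. Let S = X_1 + ... + X_d. Then for every t ≥ 0, E[e^{−tS}] = Σ_{i∈{0,1}^d} P(I = i) ∏_{k=1}^d E[exp(−t X^[i_k+1]_k)], where X^[i_k+1]_k denotes X^[1]_k if i_k = 0 and X^[2]_k if i_k = 1. -/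
open MeasureTheory ProbabilityTheory

/-! Splitting according to the value of `I`, the integrand is
`∑ᵢ 𝟙{I = i} ∏ₖ exp (-t X (i k) k)`. Each summand is a product of functions of the distinct
members of the independent family `(I, X j k)`, the factors with `j ≠ i k` being `1`, so its
expectation factorizes as `P(I = i) ∏ₖ E[exp (-t X (i k) k)]`. Nonnegativity and `t ≥ 0` bound
every summand by `1`, which makes the expectation of the sum the sum of the expectations. -/

lemma fin_two_select (a : Fin 2 → ℝ) (j : Fin 2) :
    (1 - ((j : ℕ) : ℝ)) * a 0 + ((j : ℕ) : ℝ) * a 1 = a j := by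
  fin_cases j <;> simp

section

variable {Ω : Type*} {d : ℕ} {I : Ω → Fin d → Fin 2} {X : Fin 2 → Fin d → Ω → ℝ}

lemma exp_neg_mul_sum_select_eq_sum_ite (t : ℝ) (ω : Ω) :
    Real.exp (-t * ∑ k, ((1 - ((I ω k : ℕ) : ℝ)) * X 0 k ω + ((I ω k : ℕ) : ℝ) * X 1 k ω))
      = ∑ i, (if I ω = i then 1 else 0) * ∏ k, Real.exp (-t * X (i k) k ω) := by
  have hselect (k : Fin d) :
      (1 - ((I ω k : ℕ) : ℝ)) * X 0 k ω + ((I ω k : ℕ) : ℝ) * X 1 k ω = X (I ω k) k ω :=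
    fin_two_select (X · k ω) (I ω k)
  simp only [hselect, Finset.mul_sum, Real.exp_sum, ite_mul, one_mul, zero_mul,
    Fintype.sum_ite_eq]

noncomputable def fgmTest (t : ℝ) (i : Fin d → Fin 2) :
    (o : Option (Fin d × Fin 2)) → fgmType d o → ℝ
  | none => fun v : Fin d → Fin 2 => if v = i then 1 else 0
  | some p => fun x : ℝ => if p.2 = i p.1 then Real.exp (-t * x) else 1

lemma prod_fgmTest_fgmFamily (t : ℝ) (i : Fin d → Fin 2) (ω : Ω) :
    ∏ o, fgmTest t i o (fgmFamily d I X o ω)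
      = (if I ω = i then 1 else 0) * ∏ k, Real.exp (-t * X (i k) k ω) := by
  simp only [Fintype.prod_option, Fintype.prod_prod_type]
  congr 1
  exact Finset.prod_congr rfl fun k _ => Fintype.prod_ite_eq' (i k) _

variable [MeasurableSpace Ω] {P : Measure Ω}

lemma measurable_fgmTest (t : ℝ) (i : Fin d → Fin 2) (o : Option (Fin d × Fin 2)) :
    Measurable (fgmTest t i o) := by
  rcases o with _ | ⟨k, j⟩
  · exact measurable_of_countable (α := Fin d → Fin 2) _
  · exact Measurable.ite (.const _) (by fun_prop) measurable_const

lemma measurable_fgmFamily (hI : Measurable I) (hX : ∀ j k, Measurable (X j k))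
    (o : Option (Fin d × Fin 2)) : Measurable (fgmFamily d I X o) := by
  rcases o with _ | ⟨k, j⟩
  · exact hI
  · exact hX j k

lemma prod_integral_fgmTest_fgmFamily [IsProbabilityMeasure P] (hI : Measurable I) (t : ℝ)
    (i : Fin d → Fin 2) :
    ∏ o, ∫ ω, fgmTest t i o (fgmFamily d I X o ω) ∂P
      = P.real {ω | I ω = i} * ∏ k, ∫ ω, Real.exp (-t * X (i k) k ω) ∂P := by
  simp only [Fintype.prod_option, Fintype.prod_prod_type]
  congr 1
  · rw [← integral_indicator_one (s := {ω | I ω = i}) (hI (measurableSet_singleton i))]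
    congr with ω
    by_cases h : I ω = i <;> simp [fgmTest, fgmFamily, h]
  · refine Finset.prod_congr rfl fun k _ => ?_
    have hfactor (j : Fin 2) :
        ∫ ω, fgmTest t i (some (k, j)) (fgmFamily d I X (some (k, j)) ω) ∂P
          = if j = i k then ∫ ω, Real.exp (-t * X j k ω) ∂P else 1 := by
      split_ifs with hj <;> simp [fgmTest, fgmFamily, hj]
    simp only [hfactor, Fintype.prod_ite_eq']

theorem integral_ite_mul_prod_exp_neg_mul_of_iIndepFun [IsProbabilityMeasure P]
    (hI : Measurable I) (hX : ∀ j k, Measurable (X j k))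
    (hIndep : iIndepFun (fgmFamily d I X) P) (t : ℝ) (i : Fin d → Fin 2) :
    ∫ ω, (if I ω = i then 1 else 0) * ∏ k, Real.exp (-t * X (i k) k ω) ∂P
      = P.real {ω | I ω = i} * ∏ k, ∫ ω, Real.exp (-t * X (i k) k ω) ∂P := by
  simp_rw [← prod_fgmTest_fgmFamily, ← prod_integral_fgmTest_fgmFamily hI]
  exact hIndep.integral_fun_prod_comp (fun o => (measurable_fgmFamily hI hX o).aemeasurable)
    fun o => (measurable_fgmTest t i o).aestronglyMeasurable

lemma integrable_ite_mul_prod_exp_neg_mul [IsFiniteMeasure P] (hI : Measurable I)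
    (hX : ∀ j k, Measurable (X j k)) (hnonneg : ∀ j k ω, 0 ≤ X j k ω) {t : ℝ} (ht : 0 ≤ t)
    (i : Fin d → Fin 2) :
    Integrable (fun ω => (if I ω = i then 1 else 0) * ∏ k, Real.exp (-t * X (i k) k ω)) P := by
  have hmeas : Measurable fun ω => if I ω = i then (1 : ℝ) else 0 :=
    Measurable.ite (hI (measurableSet_singleton i)) measurable_const measurable_const
  refine .of_bound (by fun_prop) 1 (ae_of_all _ fun ω => ?_)
  have hexp (k : Fin d) : Real.exp (-t * X (i k) k ω) ≤ 1 :=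
    Real.exp_le_one_iff.2 (by nlinarith [hnonneg (i k) k ω])
  rw [norm_mul, Real.norm_of_nonneg (by positivity), Real.norm_of_nonneg (by positivity)]
  exact mul_le_one₀ (by split_ifs <;> norm_num) (by positivity)
    (Finset.prod_le_one (fun k _ => by positivity) fun k _ => hexp k)

end

theorem fgm_aggregate_lst_general {Ω : Type*} [MeasurableSpace Ω]
    (P : Measure Ω) [IsProbabilityMeasure P] (d : ℕ)
    (I : Ω → Fin d → Fin 2) (X : Fin 2 → Fin d → Ω → ℝ)
    (hI : Measurable I) (hX : ∀ j k, Measurable (X j k))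
    (hnonneg : ∀ j k ω, 0 ≤ X j k ω)
    (hIndep : iIndepFun (fgmFamily d I X) P) :
    ∀ t : ℝ, 0 ≤ t →
      ∫ ω, Real.exp (-t * ∑ k,
          ((1 - ((I ω k : ℕ) : ℝ)) * X 0 k ω + ((I ω k : ℕ) : ℝ) * X 1 k ω)) ∂P
        = ∑ i : Fin d → Fin 2, (P {ω | I ω = i}).toReal *
            ∏ k, ∫ ω, Real.exp (-t * X (i k) k ω) ∂P := by
  intro t ht
  simp_rw [exp_neg_mul_sum_select_eq_sum_ite]
  rw [integral_finsetSum _ fun i _ => integrable_ite_mul_prod_exp_neg_mul hI hX hnonneg ht i]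
  exact Finset.sum_congr rfl fun i _ =>
    integral_ite_mul_prod_exp_neg_mul_of_iIndepFun hI hX hIndep t i

/-- Theorem 3.1: the Laplace–Stieltjes transform of the aggregate rv
`S = X_1 + ⋯ + X_d` of the FGM construction with nonnegative marginals. -/
theorem fgm_aggregate_lst {Ω : Type*} [MeasurableSpace Ω]
    (P : Measure Ω) [IsProbabilityMeasure P] (d : ℕ) (F : Fin d → ℝ → ℝ)
    (I : Ω → Fin d → Fin 2) (X : Fin 2 → Fin d → Ω → ℝ)
    (hI : Measurable I) (hX : ∀ j k, Measurable (X j k))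
    (hnonneg : ∀ j k ω, 0 ≤ X j k ω)
    (hIndep : iIndepFun (fgmFamily d I X) P)
    (hcdf_min : ∀ k x, (P {ω | X 0 k ω ≤ x}).toReal = 1 - (1 - F k x) ^ 2)
    (hcdf_max : ∀ k x, (P {ω | X 1 k ω ≤ x}).toReal = (F k x) ^ 2) :
    ∀ t : ℝ, 0 ≤ t →
      ∫ ω, Real.exp (-t * ∑ k,
          ((1 - ((I ω k : ℕ) : ℝ)) * X 0 k ω + ((I ω k : ℕ) : ℝ) * X 1 k ω)) ∂P
        = ∑ i : Fin d → Fin 2, (P {ω | I ω = i}).toReal *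
            ∏ k, ∫ ω, Real.exp (-t * X (i k) k ω) ∂P :=
  fgm_aggregate_lst_general P d I X hI hX hnonneg hIndep
end

section
/- Consider the FGM construction with strictly positive marginals: I : Ω → {0,1}^d a random vector, X^[1]_k with cdf 1−(1−F_k)^2 and X^[2]_k with cdf F_k^2 for cdfs F_k of strictly positive rvs, all 2d+1 random elements mutually independent, and X_k = (1−I_k)X^[1]_k + I_k X^[2]_k, S = X_1 + ... + X_d. Fix m ∈ ℕ≥1 and assume E[(X^[j]_k)^m] < ∞ for all k, j. Writing E[X_k^j] for the j-th moment of the marginal distribution F_k (with E[X_k^0] = 1) and μ^{(j)}_{k,[2]} = E[(X^[2]_k)^j], one has E[S^m] = Σ_{(j_1,...,j_d)∈ℕ^d : j_1+···+j_d = m} (m!/(j_1!···j_d!)) · (∏_{k=1}^d E[X_k^{j_k}]) · Σ_{i∈{0,1}^d} P(I=i) ∏_{k=1}^d [1 + (−1)^{i_k}(1 − μ^{(j_k)}_{k,[2]}/E[X_k^{j_k}])]. -/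
/-!
Since `X_k = X^[I_k]_k`, the power `S^m` splits over the events `{I = i}` as
`∑ᵢ 1{I = i} (∑ₖ X^[i_k]_k)^m`, and the multinomial theorem expands each summand into terms
`1{I = i} ∏ₖ (X^[i_k]_k)^{j_k}`. By independence of `I` and the selected components, such a
term has expectation `P(I = i) ∏ₖ μ^{(j_k)}_{k,[i_k]}`. Finally both order-statistic moments
are recovered from their mean `E[X_k^j] > 0` and the moment of the maximum as
`μ^{(j)}_{k,[c]} = E[X_k^j] (1 + (-1)^c (1 - μ^{(j)}_{k,[2]} / E[X_k^j]))`.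
-/

open MeasureTheory ProbabilityTheory

section

variable {Ω : Type*} [MeasurableSpace Ω] {μ : Measure Ω}

lemma ProbabilityTheory.iIndepFun.integrable_fun_prod {ι 𝕜 : Type*} [Fintype ι] [RCLike 𝕜]
    {X : ι → Ω → 𝕜} (hX : iIndepFun X μ) (hint : ∀ i, Integrable (X i) μ) :
    Integrable (fun ω ↦ ∏ i, X i ω) μ := by
  have := hX.isProbabilityMeasure
  have mX : ∀ i, AEMeasurable (X i) μ := fun i ↦ (hint i).aemeasurable
  have hmap := hX.map_fun_eq_pi_map mX
  refine (integrable_map_measure (g := fun x : ι → 𝕜 ↦ ∏ i, x i) ?_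
    (aemeasurable_pi_lambda _ mX)).1 ?_
  · rw [hmap]; fun_prop
  · rw [hmap]
    exact .fintype_prod fun i ↦ (integrable_map_measure aestronglyMeasurable_id (mX i)).2 (hint i)

lemma MeasureTheory.Integrable.pow_of_le [IsFiniteMeasure μ] {f : Ω → ℝ} {m j : ℕ}
    (hfm : Integrable (fun ω ↦ f ω ^ m) μ) (hf : AEStronglyMeasurable f μ) (hjm : j ≤ m) :
    Integrable (fun ω ↦ f ω ^ j) μ := by
  refine ((integrable_const 1).add hfm.norm).mono' (hf.pow j) (.of_forall fun ω ↦ ?_)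
  rw [norm_pow, Pi.add_apply, norm_pow]
  rcases le_total ‖f ω‖ 1 with h | h
  · linarith [pow_le_one₀ (norm_nonneg (f ω)) h (n := j), pow_nonneg (norm_nonneg (f ω)) m]
  · linarith [pow_le_pow_right₀ h hjm]

lemma integral_pos_of_forall_pos [NeZero μ] {f : Ω → ℝ} (hf : ∀ ω, 0 < f ω)
    (hfi : Integrable f μ) : 0 < ∫ ω, f ω ∂μ := by
  rw [integral_pos_iff_support_of_nonneg (fun ω ↦ (hf ω).le) hfi,
    Function.support_eq_univ fun ω ↦ (hf ω).ne']
  simp [NeZero.ne μ]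

end

lemma eq_mean_mul_one_add_neg_one_pow {K : Type*} [Field K] (a : Fin 2 → K) {e : K}
    (he : e ≠ 0) (hmean : e = (a 0 + a 1) / 2) (c : Fin 2) :
    a c = e * (1 + (-1) ^ (c : ℕ) * (1 - a 1 / e)) := by
  have h2 : (2 : K) ≠ 0 := by rintro h; simp [h] at hmean; exact he hmean
  match c with
  | 0 => simp only [Fin.val_zero, pow_zero]; field_simp; rw [hmean]; field_simp; ring
  | 1 => simp only [Fin.val_one, pow_one]; field_simp; ring

lemma one_sub_mul_add_mul_eq {R : Type*} [Ring R] (x : Fin 2 → R) (c : Fin 2) :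
    (1 - ((c : ℕ) : R)) * x 0 + ((c : ℕ) : R) * x 1 = x c := by
  match c with
  | 0 | 1 => simp

lemma Nat.cast_multinomial {K : Type*} [Field K] [CharZero K] {α : Type*} (s : Finset α)
    (f : α → ℕ) :
    (Nat.multinomial s f : K) = (∑ i ∈ s, f i).factorial / ∏ i ∈ s, ((f i).factorial : K) := by
  rw [eq_div_iff (Finset.prod_ne_zero_iff.2 fun i _ ↦
    Nat.cast_ne_zero.2 (Nat.factorial_ne_zero _)), mul_comm]
  exact_mod_cast Nat.multinomial_spec s f

lemma Finset.Nat.le_of_mem_antidiagonalTuple {d m : ℕ} {j : Fin d → ℕ}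
    (hj : j ∈ Finset.Nat.antidiagonalTuple d m) (k : Fin d) : j k ≤ m :=
  Finset.Nat.mem_antidiagonalTuple.1 hj ▸ Finset.single_le_sum (fun _ _ ↦ Nat.zero_le _)
    (Finset.mem_univ k)

section Fgm

variable {Ω : Type*} {d : ℕ} {I : Ω → Fin d → Fin 2} {X : Fin 2 → Fin d → Ω → ℝ}

/-- The factor contributed by coordinate `o` of the FGM family, reindexed along the selection
`k ↦ X^[i_k]_k`, to the term `1{I = i} ∏ₖ (X^[i_k]_k)^{j_k}`. -/
noncomputable def fgmSelector (i : Fin d → Fin 2) (j : Fin d → ℕ) :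
    (o : Option (Fin d)) → fgmType d (o.map fun k ↦ (k, i k)) → ℝ
  | none => ({i} : Set (Fin d → Fin 2)).indicator 1
  | some k => fun x : ℝ ↦ x ^ j k

lemma prod_fgmSelector (i : Fin d → Fin 2) (j : Fin d → ℕ) (ω : Ω) :
    ∏ o, fgmSelector i j o (fgmFamily d I X (o.map fun k ↦ (k, i k)) ω)
      = {ω | I ω = i}.indicator 1 ω * ∏ k, X (i k) k ω ^ j k := by
  rw [Fintype.prod_option]
  rfl

lemma fgm_sum_pow_eq (ω : Ω) (m : ℕ) :
    (∑ k, ((1 - ((I ω k : ℕ) : ℝ)) * X 0 k ω + ((I ω k : ℕ) : ℝ) * X 1 k ω)) ^ m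
      = ∑ j ∈ Finset.Nat.antidiagonalTuple d m, (Nat.multinomial Finset.univ j : ℝ) *
          ∑ i, {ω | I ω = i}.indicator 1 ω * ∏ k, X (i k) k ω ^ j k := by
  have hselect : ∀ k, (1 - ((I ω k : ℕ) : ℝ)) * X 0 k ω + ((I ω k : ℕ) : ℝ) * X 1 k ω
      = X (I ω k) k ω := fun k ↦ one_sub_mul_add_mul_eq (fun c ↦ X c k ω) (I ω k)
  calc _ = (∑ k, X (I ω k) k ω) ^ m := by simp only [hselect]
    _ = ∑ i, {ω | I ω = i}.indicator 1 ω * (∑ k, X (i k) k ω) ^ m := by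
      simp [Set.indicator_apply]
    _ = _ := by
      simp_rw [Finset.sum_pow_eq_sum_piAntidiag, Finset.piAntidiag_univ_fin_eq_antidiagonalTuple,
        Finset.mul_sum]
      rw [Finset.sum_comm]
      simp only [mul_left_comm]

variable [MeasurableSpace Ω] {P : Measure Ω}

lemma measurable_fgmSelector (i : Fin d → Fin 2) (j : Fin d → ℕ) :
    ∀ o, Measurable (fgmSelector i j o)
  | none => measurable_one.indicator (measurableSet_singleton i)
  | some k => (measurable_id.pow_const (j k) : Measurable fun x : ℝ ↦ x ^ j k)

lemma iIndepFun_fgmSelector (hIndep : iIndepFun (fgmFamily d I X) P)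
    (i : Fin d → Fin 2) (j : Fin d → ℕ) :
    iIndepFun (fun o ω ↦ fgmSelector i j o (fgmFamily d I X (o.map fun k ↦ (k, i k)) ω)) P :=
  (hIndep.precomp (Option.map_injective fun _ _ h ↦ congrArg Prod.fst h)).comp _
    (measurable_fgmSelector i j)

lemma integral_indicator_mul_prod_pow (hIndep : iIndepFun (fgmFamily d I X) P)
    (hI : Measurable I) (hX : ∀ c k, Measurable (X c k)) (i : Fin d → Fin 2)
    (j : Fin d → ℕ) :
    ∫ ω, {ω | I ω = i}.indicator 1 ω * ∏ k, X (i k) k ω ^ j k ∂P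
      = P.real {ω | I ω = i} * ∏ k, ∫ ω, X (i k) k ω ^ j k ∂P := by
  have hfamily : ∀ o, Measurable (fgmFamily d I X o)
    | none => hI
    | some p => hX p.2 p.1
  simp_rw [← prod_fgmSelector]
  rw [(iIndepFun_fgmSelector hIndep i j).integral_fun_prod_eq_prod_integral
    fun o ↦ ((measurable_fgmSelector i j o).comp (hfamily _)).aestronglyMeasurable,
    Fintype.prod_option]
  congr 1
  exact integral_indicator_one (hI (measurableSet_singleton i))

lemma integrable_indicator_mul_prod_pow (hIndep : iIndepFun (fgmFamily d I X) P)
    (hI : Measurable I) {i : Fin d → Fin 2} {j : Fin d → ℕ}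
    (hint : ∀ k, Integrable (fun ω ↦ X (i k) k ω ^ j k) P) :
    Integrable (fun ω ↦ {ω | I ω = i}.indicator 1 ω * ∏ k, X (i k) k ω ^ j k) P := by
  have := hIndep.isProbabilityMeasure
  simp_rw [← prod_fgmSelector]
  refine (iIndepFun_fgmSelector hIndep i j).integrable_fun_prod fun o ↦ ?_
  cases o with
  | none => exact (integrable_const 1).indicator (hI (measurableSet_singleton i))
  | some k => exact hint k

lemma integral_fgm_sum_pow (hIndep : iIndepFun (fgmFamily d I X) P) (hI : Measurable I)
    (hX : ∀ c k, Measurable (X c k)) {m : ℕ}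
    (hint : ∀ c k, ∀ j ≤ m, Integrable (fun ω ↦ X c k ω ^ j) P) :
    ∫ ω, (∑ k, ((1 - ((I ω k : ℕ) : ℝ)) * X 0 k ω + ((I ω k : ℕ) : ℝ) * X 1 k ω)) ^ m ∂P
      = ∑ j ∈ Finset.Nat.antidiagonalTuple d m, (Nat.multinomial Finset.univ j : ℝ) *
          ∑ i, P.real {ω | I ω = i} * ∏ k, ∫ ω, X (i k) k ω ^ j k ∂P := by
  have hterm : ∀ j ∈ Finset.Nat.antidiagonalTuple d m, ∀ i,
      Integrable (fun ω ↦ {ω | I ω = i}.indicator 1 ω * ∏ k, X (i k) k ω ^ j k) P :=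
    fun j hj i ↦ integrable_indicator_mul_prod_pow hIndep hI fun k ↦
      hint _ _ _ (Finset.Nat.le_of_mem_antidiagonalTuple hj k)
  simp_rw [fgm_sum_pow_eq]
  rw [integral_finsetSum _ fun j hj ↦
    (integrable_finsetSum _ fun i _ ↦ hterm j hj i).const_mul _]
  refine Finset.sum_congr rfl fun j hj ↦ ?_
  rw [integral_const_mul, integral_finsetSum _ fun i _ ↦ hterm j hj i]
  simp_rw [integral_indicator_mul_prod_pow hIndep hI hX]

end Fgm

theorem fgm_aggregate_moments_general {Ω : Type*} [MeasurableSpace Ω]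
    (P : Measure Ω) [IsProbabilityMeasure P] (d : ℕ)
    (I : Ω → Fin d → Fin 2) (X : Fin 2 → Fin d → Ω → ℝ)
    (hI : Measurable I) (hX : ∀ j k, Measurable (X j k))
    (hpos : ∀ j k ω, 0 < X j k ω)
    (hIndep : iIndepFun (fgmFamily d I X) P)
    (m : ℕ)
    (hint : ∀ j k, Integrable (fun ω => X j k ω ^ m) P)
    (EX : Fin d → ℕ → ℝ)
    (hEX : ∀ k j, EX k j
      = ((∫ ω, X 0 k ω ^ j ∂P) + ∫ ω, X 1 k ω ^ j ∂P) / 2) :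
    ∫ ω, (∑ k, ((1 - ((I ω k : ℕ) : ℝ)) * X 0 k ω + ((I ω k : ℕ) : ℝ) * X 1 k ω)) ^ m ∂P
      = ∑ j ∈ Finset.Nat.antidiagonalTuple d m,
          ((m.factorial : ℝ) / ∏ k, ((j k).factorial : ℝ))
            * (∏ k, EX k (j k))
            * ∑ i : Fin d → Fin 2, (P {ω | I ω = i}).toReal *
                ∏ k, (1 + (-1 : ℝ) ^ ((i k : ℕ))
                  * (1 - (∫ ω, X 1 k ω ^ (j k) ∂P) / EX k (j k))) := by
  have hpow : ∀ c k, ∀ j ≤ m, Integrable (fun ω ↦ X c k ω ^ j) P :=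
    fun c k j hj ↦ (hint c k).pow_of_le (hX c k).aestronglyMeasurable hj
  have hmoment : ∀ k, ∀ j ≤ m, ∀ c : Fin 2, ∫ ω, X c k ω ^ j ∂P
      = EX k j * (1 + (-1) ^ (c : ℕ) * (1 - (∫ ω, X 1 k ω ^ j ∂P) / EX k j)) := by
    intro k j hj
    have hpos_moment : ∀ c, 0 < ∫ ω, X c k ω ^ j ∂P := fun c ↦
      integral_pos_of_forall_pos (fun ω ↦ pow_pos (hpos c k ω) j) (hpow c k j hj)
    refine eq_mean_mul_one_add_neg_one_pow (fun c ↦ ∫ ω, X c k ω ^ j ∂P) ?_ (hEX k j)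
    rw [hEX]
    linarith [hpos_moment 0, hpos_moment 1]
  rw [integral_fgm_sum_pow hIndep hI hX hpow]
  refine Finset.sum_congr rfl fun j hj ↦ ?_
  have hjm := Finset.Nat.le_of_mem_antidiagonalTuple hj
  rw [Nat.cast_multinomial, Finset.Nat.mem_antidiagonalTuple.1 hj, mul_assoc,
    Finset.mul_sum _ _ (∏ k, EX k (j k))]
  congr 1
  refine Finset.sum_congr rfl fun i _ ↦ ?_
  rw [Finset.prod_congr rfl fun k _ ↦ hmoment k (j k) (hjm k) (i k), Finset.prod_mul_distrib,
    measureReal_def]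
  ring

/-- Theorem 3.2, formula (3.4): the `m`-th moment of the aggregate rv
`S = X_1 + ⋯ + X_d` of the FGM construction with strictly positive marginals, in terms of
the marginal moments `EX k j` (the `j`-th moment of the marginal distribution `F_k`,
which equals the average of the `j`-th moments of the two order statistics) and the
moments `μ^{(j)}_{k,[2]}` of the maxima. -/
theorem fgm_aggregate_moments {Ω : Type*} [MeasurableSpace Ω]
    (P : Measure Ω) [IsProbabilityMeasure P] (d : ℕ) (F : Fin d → ℝ → ℝ)
    (I : Ω → Fin d → Fin 2) (X : Fin 2 → Fin d → Ω → ℝ)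
    (hI : Measurable I) (hX : ∀ j k, Measurable (X j k))
    (hpos : ∀ j k ω, 0 < X j k ω)
    (hIndep : iIndepFun (fgmFamily d I X) P)
    (hcdf_min : ∀ k x, (P {ω | X 0 k ω ≤ x}).toReal = 1 - (1 - F k x) ^ 2)
    (hcdf_max : ∀ k x, (P {ω | X 1 k ω ≤ x}).toReal = (F k x) ^ 2)
    (m : ℕ) (hm : 1 ≤ m)
    (hint : ∀ j k, Integrable (fun ω => X j k ω ^ m) P)
    (EX : Fin d → ℕ → ℝ)
    (hEX : ∀ k j, EX k j
      = ((∫ ω, X 0 k ω ^ j ∂P) + ∫ ω, X 1 k ω ^ j ∂P) / 2) :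
    ∫ ω, (∑ k, ((1 - ((I ω k : ℕ) : ℝ)) * X 0 k ω + ((I ω k : ℕ) : ℝ) * X 1 k ω)) ^ m ∂P
      = ∑ j ∈ Finset.Nat.antidiagonalTuple d m,
          ((m.factorial : ℝ) / ∏ k, ((j k).factorial : ℝ))
            * (∏ k, EX k (j k))
            * ∑ i : Fin d → Fin 2, (P {ω | I ω = i}).toReal *
                ∏ k, (1 + (-1 : ℝ) ^ ((i k : ℕ))
                  * (1 - (∫ ω, X 1 k ω ^ (j k) ∂P) / EX k (j k))) :=
  fgm_aggregate_moments_general P d I X hI hX hpos hIndep m hint EX hEX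
end

section
/- Let β > 0 and let (q_j)_{j≥1} be nonnegative weights with Σ_{j=1}^∞ q_j = 1, and set F(x) = Σ_{j=1}^∞ q_j H(x; j, β) for x ≥ 0 (a mixed Erlang cdf). Let Q_0 = 0 and Q_n = Σ_{m=1}^n q_m for n ≥ 1. Define, for j ≥ 1, q_{j,[1]} = 2^{−(j−1)} Σ_{m=0}^{j−1} C(j−1, m) q_{m+1} (1 − Q_{j−1−m}) and q_{j,[2]} = 2^{−(j−1)} Σ_{m=0}^{j−1} C(j−1, m) q_{m+1} Q_{j−1−m}, where C(n,m) is the binomial coefficient. Then for all x ≥ 0: 1 − (1 − F(x))^2 = Σ_{j=1}^∞ q_{j,[1]} H(x; j, 2β) and F(x)^2 = Σ_{j=1}^∞ q_{j,[2]} H(x; j, 2β). In particular the minimum and maximum of two iid mixed Erlang rvs with rate β are mixed Erlang with rate 2β. -/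
/-!
Put `y = β x`. Since `H(x; j, β) = P(N ≥ j)` for `N ~ Poisson(y)`, a mixed Erlang cdf is
`F(x) = E[Q(N)]`. A product of two such expectations is an expectation over
`N₁ + N₂ ~ Poisson(2y)`, given which `N₁ ~ Bin(N₁ + N₂, 1/2)`. Hence `F²` and `(1 - F)²` are
`Poisson(2y)` expectations of `t n = E[Q(K) Q(n - K)]` and `s n = E[(1 - Q(K)) (1 - Q(n - K))]`,
`K ~ Bin(n, 1/2)`. Pascal's rule identifies `t` and `1 - s` as the cdfs of the weights `q_{j,[2]}`
and `q_{j,[1]}`, and both tend to `1` because `Bin(n, 1/2)` leaves every bounded set.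
-/

open MeasureTheory

/-- The cdf `H(x; j, b)` of an Erlang distribution with integer shape `j ≥ 1` and
rate `b > 0`: `H(x; j, b) = ∫_0^x b^j t^{j−1} e^{−bt}/(j−1)! dt`. -/
noncomputable def erlangCDF (x : ℝ) (j : ℕ) (b : ℝ) : ℝ :=
  ∫ t in (0 : ℝ)..x, b ^ j * t ^ (j - 1) * Real.exp (-b * t) / (Nat.factorial (j - 1))

open Finset Filter Topology
open scoped Nat

theorem hasDerivAt_exp_neg_mul_sum_range (b y : ℝ) (j : ℕ) :
    HasDerivAt (fun z => Real.exp (-(b * z)) * ∑ i ∈ range (j + 1), (b * z) ^ i / i !)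
      (-(b ^ (j + 1) * y ^ j * Real.exp (-(b * y)) / j !)) y := by
  have hexp : HasDerivAt (fun z => Real.exp (-(b * z))) (Real.exp (-(b * y)) * -b) y := by
    simpa using (((hasDerivAt_id y).const_mul b).fun_neg).exp
  induction j with
  | zero => simpa [mul_comm] using hexp
  | succ j ih =>
    have hpow : HasDerivAt (fun z => (b * z) ^ (j + 1) / (j + 1)!)
        ((j + 1 : ℕ) * (b * y) ^ j * b / (j + 1)!) y := by
      simpa using (((hasDerivAt_id y).const_mul b).fun_pow (j + 1)).div_const ((j + 1)! : ℝ)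
    refine ((ih.fun_add (hexp.fun_mul hpow)).congr_deriv ?_).congr_of_eventuallyEq
      (.of_forall fun z => by simp only [sum_range_succ, mul_add])
    rw [Nat.factorial_succ]
    push_cast
    field_simp
    ring

theorem erlangCDF_succ (x : ℝ) (j : ℕ) (b : ℝ) :
    erlangCDF x (j + 1) b =
      1 - Real.exp (-(b * x)) * ∑ i ∈ range (j + 1), (b * x) ^ i / i ! := by
  rw [erlangCDF, intervalIntegral.integral_eq_sub_of_hasDerivAt
    (f := fun z => -(Real.exp (-(b * z)) * ∑ i ∈ range (j + 1), (b * z) ^ i / i !))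
    (fun t _ => by simpa [neg_mul] using (hasDerivAt_exp_neg_mul_sum_range b t j).fun_neg)
    (by apply Continuous.intervalIntegrable; fun_prop)]
  simp [sum_range_succ', ← sub_eq_neg_add]

noncomputable def poissonExpectation (y : ℝ) (f : ℕ → ℝ) : ℝ :=
  Real.exp (-y) * ∑' i, y ^ i / i ! * f i

noncomputable def halfBinomialMean (f g : ℕ → ℝ) (n : ℕ) : ℝ :=
  (∑ ij ∈ antidiagonal n, (n.choose ij.1 : ℝ) * (f ij.1 * g ij.2)) / 2 ^ n

theorem hasSum_pow_div_factorial_exp (y : ℝ) : HasSum (fun i => y ^ i / i !) (Real.exp y) := by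
  simpa [Real.exp_eq_exp_ℝ] using NormedSpace.expSeries_div_hasSum_exp y

theorem summable_norm_pow_div_factorial_mul (y : ℝ) {f : ℕ → ℝ} {C : ℝ}
    (hf : ∀ i, |f i| ≤ C) :
    Summable fun i => ‖y ^ i / i ! * f i‖ := by
  refine .of_nonneg_of_le (fun _ => norm_nonneg _) (fun i => ?_)
    ((Real.summable_pow_div_factorial |y|).mul_right C)
  rw [Real.norm_eq_abs, abs_mul, abs_div, abs_pow, Nat.abs_cast]
  exact mul_le_mul_of_nonneg_left (hf i) (by positivity)

theorem poissonExpectation_one_sub (y : ℝ) {f : ℕ → ℝ} {C : ℝ} (hf : ∀ i, |f i| ≤ C) :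
    poissonExpectation y (fun i => 1 - f i) = 1 - poissonExpectation y f := by
  have hsum : ∑' i, y ^ i / i ! * (1 - f i) = Real.exp y - ∑' i, y ^ i / i ! * f i := by
    simp only [mul_sub, mul_one]
    rw [(Real.summable_pow_div_factorial y).tsum_sub
      (summable_norm_pow_div_factorial_mul y hf).of_norm,
      (hasSum_pow_div_factorial_exp y).tsum_eq]
  rw [poissonExpectation, poissonExpectation, hsum, mul_sub, ← Real.exp_add, neg_add_cancel,
    Real.exp_zero]

theorem pow_div_factorial_mul_pow_div_factorial (y : ℝ) (i j : ℕ) :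
    y ^ i / i ! * (y ^ j / j !) =
      (2 * y) ^ (i + j) / (i + j)! * ((i + j).choose i / 2 ^ (i + j)) := by
  have h := Nat.add_choose_mul_factorial_mul_factorial i j
  rw [← Nat.choose_symm_add, ← Nat.cast_inj (R := ℝ)] at h
  push_cast at h
  have hc : ((i + j).choose i : ℝ) ≠ 0 := Nat.cast_ne_zero.2 (Nat.choose_pos (by omega)).ne'
  rw [← h]
  field_simp
  ring

theorem poissonExpectation_mul (y : ℝ) {f g : ℕ → ℝ} {C D : ℝ} (hf : ∀ i, |f i| ≤ C)
    (hg : ∀ j, |g j| ≤ D) :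
    poissonExpectation y f * poissonExpectation y g =
      poissonExpectation (2 * y) (halfBinomialMean f g) := by
  have hprod := tsum_mul_tsum_eq_tsum_sum_antidiagonal_of_summable_norm
    (summable_norm_pow_div_factorial_mul y hf) (summable_norm_pow_div_factorial_mul y hg)
  have hexp : Real.exp (-y) * Real.exp (-y) = Real.exp (-(2 * y)) := by
    rw [← Real.exp_add]; ring_nf
  rw [poissonExpectation, poissonExpectation, poissonExpectation, mul_mul_mul_comm, hprod, hexp]
  congr 1
  refine tsum_congr fun n => ?_
  rw [halfBinomialMean, sum_div, mul_sum]
  refine sum_congr rfl fun ⟨i, j⟩ hij => ?_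
  rw [HasAntidiagonal.mem_antidiagonal] at hij
  subst hij
  rw [mul_mul_mul_comm, pow_div_factorial_mul_pow_div_factorial]
  ring

theorem tsum_ite_le_pow_div_factorial (y : ℝ) (k : ℕ) :
    ∑' i, (if k ≤ i then y ^ i / i ! else 0) = Real.exp y - ∑ i ∈ range k, y ^ i / i ! := by
  have hc := Real.summable_pow_div_factorial y
  have htail := (hc.indicator {i | k ≤ i}).sum_add_tsum_nat_add k
  have hfull := hc.sum_add_tsum_nat_add k
  simp only [Set.indicator, Set.mem_ofPred_eq, le_add_iff_nonneg_left, zero_le, if_true] at htail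
  rw [sum_eq_zero fun i hi => if_neg (by simpa using hi), zero_add] at htail
  rw [← (hasSum_pow_div_factorial_exp y).tsum_eq, ← hfull, ← htail]
  ring

theorem tsum_mul_erlangCDF (b x : ℝ) {w W : ℕ → ℝ} (hW : ∀ n, W n = ∑ m ∈ range (n + 1), w m)
    (hw0 : w 0 = 0) (hw : Summable w) :
    ∑' j, w j * erlangCDF x j b = poissonExpectation (b * x) W := by
  let u : ℕ → ℕ → ℝ := fun j i => if j ≤ i then w j * ((b * x) ^ i / i !) else 0
  have hu : Summable (Function.uncurry u) := by
    refine .of_norm_bounded (hw.abs.mul_of_nonneg (Real.summable_pow_div_factorial |b * x|)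
      (fun _ => abs_nonneg _) fun _ => by positivity) fun ⟨j, i⟩ => ?_
    simp only [Function.uncurry_apply_pair, u]
    split_ifs
    · rw [Real.norm_eq_abs, abs_mul, abs_div, abs_pow, Nat.abs_cast]
    · simp only [norm_zero]; positivity
  have hrow : ∀ j, w j * erlangCDF x j b = Real.exp (-(b * x)) * ∑' i, u j i := by
    rintro (_ | j)
    · simp [u, hw0]
    · simp only [u, ← mul_ite_zero, tsum_mul_left, tsum_ite_le_pow_div_factorial, erlangCDF_succ]
      have h : Real.exp (-(b * x)) * Real.exp (b * x) = 1 := by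
        rw [← Real.exp_add, neg_add_cancel, Real.exp_zero]
      linear_combination -w (j + 1) * h
  have hcol : ∀ i, ∑' j, u j i = (b * x) ^ i / i ! * W i := by
    intro i
    rw [tsum_eq_sum (s := range (i + 1)) fun j hj => if_neg (by simpa using hj), hW, mul_sum]
    exact sum_congr rfl fun j hj => by
      rw [if_pos (by simpa [Nat.lt_succ_iff] using hj), mul_comm]
  rw [tsum_congr hrow, tsum_mul_left, ← hu.tsum_comm, tsum_congr hcol, poissonExpectation]

theorem sum_antidiagonal_choose (n : ℕ) :
    ∑ ij ∈ antidiagonal n, (n.choose ij.1 : ℝ) = 2 ^ n := by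
  rw [Nat.sum_antidiagonal_eq_sum_range_succ (fun i _ => (n.choose i : ℝ)), ← Nat.cast_sum,
    Nat.sum_range_choose]
  push_cast
  rfl

theorem halfBinomialMean_comm (f g : ℕ → ℝ) (n : ℕ) :
    halfBinomialMean f g n = halfBinomialMean g f n := by
  rw [halfBinomialMean, halfBinomialMean, ← Nat.sum_antidiagonal_swap]
  congr 1
  refine sum_congr rfl fun ⟨i, j⟩ hij => ?_
  rw [HasAntidiagonal.mem_antidiagonal] at hij
  simp only [Prod.swap, Nat.choose_symm_of_eq_add hij.symm, mul_comm (f j)]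

theorem halfBinomialMean_sub_mul (f g : ℕ → ℝ) (a b : ℝ) (n : ℕ) :
    halfBinomialMean f g n - a * b =
      halfBinomialMean (fun i => f i - a) g n + a * halfBinomialMean (fun j => g j - b) 1 n := by
  have hab : a * b = (∑ ij ∈ antidiagonal n, (n.choose ij.1 : ℝ) * (a * b)) / 2 ^ n := by
    rw [← sum_mul, sum_antidiagonal_choose]
    field_simp
  rw [halfBinomialMean_comm _ 1, hab]
  simp only [halfBinomialMean, Pi.one_apply]
  rw [mul_div_assoc', ← add_div, ← sub_div, mul_sum, ← sum_sub_distrib,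
    ← sum_add_distrib]
  exact congrArg (· / _) (sum_congr rfl fun _ _ => by ring)

theorem halfBinomialMean_self_succ_sub (f : ℕ → ℝ) (n : ℕ) :
    halfBinomialMean f f (n + 1) - halfBinomialMean f f n =
      1 / 2 ^ n * ∑ m ∈ range (n + 1), (n.choose m : ℝ) * (f (m + 1) - f m) * f (n - m) := by
  have hsplit : ∑ ij ∈ antidiagonal (n + 1), ((n + 1).choose ij.1 : ℝ) * (f ij.1 * f ij.2) =
      2 * ∑ ij ∈ antidiagonal n, (n.choose ij.1 : ℝ) * (f (ij.1 + 1) * f ij.2) := by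
    rw [sum_antidiagonal_choose_succ_mul (fun i j => f i * f j), two_mul,
      ← Nat.sum_antidiagonal_swap]
    congr 1 <;> refine sum_congr rfl fun ⟨i, j⟩ hij => ?_ <;>
      rw [HasAntidiagonal.mem_antidiagonal] at hij
    · simp only [Prod.swap, Nat.choose_symm_of_eq_add hij.symm, mul_comm (f j)]
    · simp only [Nat.choose_symm_of_eq_add hij.symm]
  have h2n : (2 : ℝ) ^ n ≠ 0 := by positivity
  rw [halfBinomialMean, halfBinomialMean, hsplit, pow_succ,
    Nat.sum_antidiagonal_eq_sum_range_succ (fun i j => (n.choose i : ℝ) * (f (i + 1) * f j)),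
    Nat.sum_antidiagonal_eq_sum_range_succ (fun i j => (n.choose i : ℝ) * (f i * f j))]
  field_simp
  rw [← sum_sub_distrib]
  exact sum_congr rfl fun _ _ => by ring

theorem tendsto_choose_div_two_pow (k : ℕ) :
    Tendsto (fun n : ℕ => (n.choose k : ℝ) / 2 ^ n) atTop (𝓝 0) :=
  squeeze_zero (fun _ => by positivity)
    (fun n => div_le_div_of_nonneg_right (by exact_mod_cast Nat.choose_le_pow n k) (by positivity))
    (tendsto_pow_const_div_const_pow_of_one_lt k one_lt_two)

theorem tendsto_sum_range_choose_mul_div_two_pow {h : ℕ → ℝ} (h0 : ∀ i, 0 ≤ h i)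
    (hh : Tendsto h atTop (𝓝 0)) :
    Tendsto (fun n => (∑ i ∈ range (n + 1), (n.choose i : ℝ) * h i) / 2 ^ n) atTop (𝓝 0) := by
  obtain ⟨M, hM⟩ := hh.bddAbove_range
  refine tendsto_order.2 ⟨fun a ha => .of_forall fun n =>
    ha.trans_le (div_nonneg (sum_nonneg fun i _ => mul_nonneg (by positivity) (h0 i))
      (by positivity)), fun ε hε => ?_⟩
  -- Beyond `k` we have `h < ε / 2`, and the mass of `Bin(n, 1/2)` on `[0, k)` vanishes.
  obtain ⟨k, hk⟩ := eventually_atTop.1 (hh.eventually (gt_mem_nhds (half_pos hε)))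
  have hhead : Tendsto (fun n => M * ∑ i ∈ range k, (n.choose i : ℝ) / 2 ^ n) atTop (𝓝 0) := by
    simpa using (tendsto_finsetSum _ fun i _ => tendsto_choose_div_two_pow i).const_mul M
  filter_upwards [hhead.eventually (gt_mem_nhds (half_pos hε)), eventually_ge_atTop k]
    with n hn hkn
  have hhead_le : ∑ i ∈ range k, (n.choose i : ℝ) * h i ≤ M * ∑ i ∈ range k, (n.choose i : ℝ) := by
    rw [mul_sum]
    exact sum_le_sum fun i _ => by
      rw [mul_comm M]; exact mul_le_mul_of_nonneg_left (hM ⟨i, rfl⟩) (by positivity)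
  have htail_le : ∑ i ∈ Ico k (n + 1), (n.choose i : ℝ) * h i ≤ 2 ^ n * (ε / 2) :=
    calc ∑ i ∈ Ico k (n + 1), (n.choose i : ℝ) * h i
        ≤ ∑ i ∈ Ico k (n + 1), (n.choose i : ℝ) * (ε / 2) :=
          sum_le_sum fun i hi => mul_le_mul_of_nonneg_left (hk i (mem_Ico.1 hi).1).le
            (by positivity)
      _ ≤ ∑ i ∈ range (n + 1), (n.choose i : ℝ) * (ε / 2) :=
          sum_le_sum_of_subset_of_nonneg (fun i hi => mem_range.2 (mem_Ico.1 hi).2)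
            fun _ _ _ => by positivity
      _ = 2 ^ n * (ε / 2) := by
          rw [← sum_mul, ← Nat.cast_sum, Nat.sum_range_choose]
          push_cast
          rfl
  rw [← sum_div, mul_div_assoc', div_lt_iff₀ (by positivity)] at hn
  rw [← sum_range_add_sum_Ico _ (by omega : k ≤ n + 1), div_lt_iff₀ (by positivity)]
  linarith

theorem abs_halfBinomialMean_le {u v : ℕ → ℝ} {D : ℝ} (hv : ∀ j, |v j| ≤ D) (n : ℕ) :
    |halfBinomialMean u v n| ≤
      D * ((∑ i ∈ range (n + 1), (n.choose i : ℝ) * |u i|) / 2 ^ n) := by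
  rw [halfBinomialMean, abs_div, abs_of_pos (by positivity : (0 : ℝ) < 2 ^ n), mul_div_assoc',
    mul_sum, Nat.sum_antidiagonal_eq_sum_range_succ (fun i j => (n.choose i : ℝ) * (u i * v j))]
  gcongr ?_ / _
  refine (abs_sum_le_sum_abs _ _).trans (sum_le_sum fun i _ => ?_)
  rw [abs_mul, abs_mul, Nat.abs_cast, ← mul_assoc, mul_comm D]
  exact mul_le_mul_of_nonneg_left (hv _) (by positivity)

theorem abs_halfBinomialMean_le_mul {u v : ℕ → ℝ} {C D : ℝ} (hu : ∀ i, |u i| ≤ C)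
    (hv : ∀ j, |v j| ≤ D) (n : ℕ) : |halfBinomialMean u v n| ≤ C * D := by
  have hD : 0 ≤ D := (abs_nonneg _).trans (hv 0)
  refine (abs_halfBinomialMean_le hv n).trans ?_
  rw [mul_comm C]
  gcongr
  rw [div_le_iff₀ (by positivity), ← Nat.cast_two, ← Nat.cast_pow, ← Nat.sum_range_choose,
    Nat.cast_sum, mul_sum]
  exact sum_le_sum fun i _ => by
    rw [mul_comm C]; exact mul_le_mul_of_nonneg_left (hu i) (by positivity)

theorem tendsto_halfBinomialMean_zero {u v : ℕ → ℝ} {D : ℝ} (hu : Tendsto u atTop (𝓝 0))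
    (hv : ∀ j, |v j| ≤ D) : Tendsto (halfBinomialMean u v) atTop (𝓝 0) := by
  have hmean := (tendsto_sum_range_choose_mul_div_two_pow (fun i => abs_nonneg (u i))
    (by simpa using hu.abs)).const_mul D
  rw [mul_zero] at hmean
  exact squeeze_zero_norm (fun n => abs_halfBinomialMean_le hv n) hmean

theorem tendsto_halfBinomialMean {f g : ℕ → ℝ} {a b : ℝ} (hf : Tendsto f atTop (𝓝 a))
    (hg : Tendsto g atTop (𝓝 b)) : Tendsto (halfBinomialMean f g) atTop (𝓝 (a * b)) := by
  obtain ⟨D, hD⟩ := hg.abs.bddAbove_range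
  have h1 := tendsto_halfBinomialMean_zero (tendsto_sub_nhds_zero_iff.2 hf) fun j => hD ⟨j, rfl⟩
  have h2 := tendsto_halfBinomialMean_zero (v := 1) (D := 1) (tendsto_sub_nhds_zero_iff.2 hg)
    fun _ => by simp
  rw [← tendsto_sub_nhds_zero_iff]
  simpa [halfBinomialMean_sub_mul] using h1.add (h2.const_mul a)

theorem sum_range_succ_eq_of_succ_sub {w a : ℕ → ℝ} (h0 : w 0 = a 0)
    (hs : ∀ n, w (n + 1) = a (n + 1) - a n) (n : ℕ) : ∑ m ∈ range (n + 1), w m = a n := by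
  rw [sum_range_succ', sum_congr rfl fun i _ => hs i, sum_range_sub, h0]
  ring

theorem sum_range_mem_Icc_of_hasSum {w : ℕ → ℝ} (hw : ∀ j, 0 ≤ w j) (h : HasSum w 1) (n : ℕ) :
    ∑ m ∈ range n, w m ∈ Set.Icc 0 1 :=
  ⟨sum_nonneg fun j _ => hw j, h.tsum_eq ▸ h.summable.sum_le_tsum _ fun j _ => hw j⟩

theorem hasSum_of_tendsto_sum_range_succ {w : ℕ → ℝ} {a : ℝ} (hw : ∀ j, 0 ≤ w j)
    (h : Tendsto (fun n => ∑ m ∈ range (n + 1), w m) atTop (𝓝 a)) : HasSum w a :=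
  (hasSum_iff_tendsto_nat_of_nonneg hw a).2 ((tendsto_add_atTop_iff_nat 1).1 h)

theorem nonneg_of_eq_mul_sum_choose {w q G : ℕ → ℝ} (hw0 : w 0 = 0) (hq : ∀ j, 0 ≤ q j)
    (hG : ∀ j, 0 ≤ G j)
    (hw : ∀ j, 1 ≤ j → w j
      = (1 / 2 ^ (j - 1)) * ∑ m ∈ range j, ((j - 1).choose m : ℝ) * q (m + 1) * G (j - 1 - m))
    (j : ℕ) : 0 ≤ w j := by
  rcases j with _ | j
  · exact hw0.ge
  rw [hw (j + 1) (by omega)]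
  exact mul_nonneg (by positivity)
    (sum_nonneg fun m _ => mul_nonneg (mul_nonneg (by positivity) (hq _)) (hG _))

section OrderStatistics

variable {q Q : ℕ → ℝ}

theorem succ_sub_eq_of_eq_sum_range (hQ : ∀ n, Q n = ∑ m ∈ range (n + 1), q m) (m : ℕ) :
    Q (m + 1) - Q m = q (m + 1) := by
  rw [hQ (m + 1), hQ m, sum_range_succ, add_sub_cancel_left]

theorem sum_range_succ_eq_halfBinomialMean (hQ : ∀ n, Q n = ∑ m ∈ range (n + 1), q m)
    (hq0 : q 0 = 0) {qmax : ℕ → ℝ} (hqmax0 : qmax 0 = 0)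
    (hqmax : ∀ j, 1 ≤ j → qmax j
      = (1 / 2 ^ (j - 1)) * ∑ m ∈ range j, ((j - 1).choose m : ℝ) * q (m + 1) * Q (j - 1 - m))
    (n : ℕ) : ∑ m ∈ range (n + 1), qmax m = halfBinomialMean Q Q n := by
  refine sum_range_succ_eq_of_succ_sub ?_ (fun n => ?_) n
  · simp [halfBinomialMean, hQ, hq0, hqmax0]
  rw [halfBinomialMean_self_succ_sub, hqmax (n + 1) (by omega), Nat.add_sub_cancel]
  simp only [succ_sub_eq_of_eq_sum_range hQ]

theorem sum_range_succ_eq_one_sub_halfBinomialMean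
    (hQ : ∀ n, Q n = ∑ m ∈ range (n + 1), q m) (hq0 : q 0 = 0) {qmin : ℕ → ℝ}
    (hqmin0 : qmin 0 = 0)
    (hqmin : ∀ j, 1 ≤ j → qmin j
      = (1 / 2 ^ (j - 1)) * ∑ m ∈ range j,
          ((j - 1).choose m : ℝ) * q (m + 1) * (1 - Q (j - 1 - m)))
    (n : ℕ) :
    ∑ m ∈ range (n + 1), qmin m =
      1 - halfBinomialMean (fun i => 1 - Q i) (fun i => 1 - Q i) n := by
  refine sum_range_succ_eq_of_succ_sub (a := fun n => 1 - halfBinomialMean _ _ n) ?_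
    (fun n => ?_) n
  · simp [halfBinomialMean, hQ, hq0, hqmin0]
  rw [sub_sub_sub_cancel_left, ← neg_sub, halfBinomialMean_self_succ_sub,
    hqmin (n + 1) (by omega), Nat.add_sub_cancel, ← mul_neg, ← sum_neg_distrib]
  refine congrArg _ (sum_congr rfl fun m _ => ?_)
  rw [sub_sub_sub_cancel_left, ← succ_sub_eq_of_eq_sum_range hQ]
  ring

end OrderStatistics

theorem mixedErlang_order_statistics_general (β : ℝ)
    (q : ℕ → ℝ) (hq0 : q 0 = 0) (hq_nonneg : ∀ j, 0 ≤ q j) (hq_sum : ∑' j, q j = 1)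
    (Q : ℕ → ℝ) (hQ : ∀ n, Q n = ∑ m ∈ Finset.range (n + 1), q m)
    (qmin qmax : ℕ → ℝ) (hqmin0 : qmin 0 = 0) (hqmax0 : qmax 0 = 0)
    (hqmin : ∀ j, 1 ≤ j → qmin j
      = (1 / 2 ^ (j - 1)) * ∑ m ∈ Finset.range j,
          ((j - 1).choose m : ℝ) * q (m + 1) * (1 - Q (j - 1 - m)))
    (hqmax : ∀ j, 1 ≤ j → qmax j
      = (1 / 2 ^ (j - 1)) * ∑ m ∈ Finset.range j,
          ((j - 1).choose m : ℝ) * q (m + 1) * Q (j - 1 - m))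
    (F : ℝ → ℝ) (hF : ∀ x, F x = ∑' j, q j * erlangCDF x j β) :
    (∀ x : ℝ, 0 ≤ x →
      1 - (1 - F x) ^ 2 = ∑' j, qmin j * erlangCDF x j (2 * β)
      ∧ (F x) ^ 2 = ∑' j, qmax j * erlangCDF x j (2 * β))
    ∧ (∀ j, 0 ≤ qmin j) ∧ (∀ j, 0 ≤ qmax j)
    ∧ (∑' j, qmin j = 1) ∧ (∑' j, qmax j = 1) := by
  have hq : HasSum q 1 :=
    hq_sum ▸ (by_contra fun hs => by simp [tsum_eq_zero_of_not_summable hs] at hq_sum :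
      Summable q).hasSum
  have hQ_mem n : Q n ∈ Set.Icc 0 1 := hQ n ▸ sum_range_mem_Icc_of_hasSum hq_nonneg hq (n + 1)
  have hQ_bdd n : |Q n| ≤ 1 := abs_le.2 ⟨by linarith [(hQ_mem n).1], (hQ_mem n).2⟩
  have hQc_bdd n : |1 - Q n| ≤ 1 :=
    abs_le.2 ⟨by linarith [(hQ_mem n).2], by linarith [(hQ_mem n).1]⟩
  have hQ_lim : Tendsto Q atTop (𝓝 1) := by
    simpa only [← hQ] using (tendsto_add_atTop_iff_nat 1).2 hq.tendsto_sum_nat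
  have hQc_lim : Tendsto (fun i => 1 - Q i) atTop (𝓝 0) := by simpa using hQ_lim.const_sub 1
  have hmax := sum_range_succ_eq_halfBinomialMean hQ hq0 hqmax0 hqmax
  have hmin := sum_range_succ_eq_one_sub_halfBinomialMean hQ hq0 hqmin0 hqmin
  have hqmax_nonneg :=
    nonneg_of_eq_mul_sum_choose hqmax0 hq_nonneg (fun n => (hQ_mem n).1) hqmax
  have hqmin_nonneg := nonneg_of_eq_mul_sum_choose (G := fun i => 1 - Q i) hqmin0 hq_nonneg
    (fun n => sub_nonneg.2 (hQ_mem n).2) hqmin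
  have hqmax_sum : HasSum qmax 1 := hasSum_of_tendsto_sum_range_succ hqmax_nonneg
    (by simpa [hmax] using tendsto_halfBinomialMean hQ_lim hQ_lim)
  have hqmin_sum : HasSum qmin 1 := hasSum_of_tendsto_sum_range_succ hqmin_nonneg
    (by simpa [hmin] using (tendsto_halfBinomialMean hQc_lim hQc_lim).const_sub 1)
  refine ⟨fun x _ => ?_, hqmin_nonneg, hqmax_nonneg, hqmin_sum.tsum_eq, hqmax_sum.tsum_eq⟩
  rw [hF, tsum_mul_erlangCDF β x hQ hq0 hq.summable,
    tsum_mul_erlangCDF (2 * β) x (W := fun n => 1 - halfBinomialMean _ _ n)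
      (fun n => (hmin n).symm) hqmin0 hqmin_sum.summable,
    tsum_mul_erlangCDF (2 * β) x (fun n => (hmax n).symm) hqmax0 hqmax_sum.summable, mul_assoc,
    sq, sq, poissonExpectation_mul _ hQ_bdd hQ_bdd, ← poissonExpectation_one_sub _ hQ_bdd,
    poissonExpectation_mul _ hQc_bdd hQc_bdd,
    poissonExpectation_one_sub _ (abs_halfBinomialMean_le_mul hQc_bdd hQc_bdd)]
  exact ⟨rfl, rfl⟩

/-- formula (4.7), closure of mixed Erlang distributions under order
statistics: if `F = Σ_{j≥1} q_j H(·; j, β)` is a mixed Erlang cdf, then the cdfs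
`1 − (1 − F)²` and `F²` of the minimum and the maximum of two iid rvs with cdf `F`
are mixed Erlang cdfs with rate `2β` and the displayed weights. (Weights are indexed by
`ℕ`, with the convention `q 0 = 0` so that the effective weights are `q 1, q 2, …`.) -/
theorem mixedErlang_order_statistics (β : ℝ) (hβ : 0 < β)
    (q : ℕ → ℝ) (hq0 : q 0 = 0) (hq_nonneg : ∀ j, 0 ≤ q j) (hq_sum : ∑' j, q j = 1)
    (Q : ℕ → ℝ) (hQ : ∀ n, Q n = ∑ m ∈ Finset.range (n + 1), q m)
    (qmin qmax : ℕ → ℝ) (hqmin0 : qmin 0 = 0) (hqmax0 : qmax 0 = 0)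
    (hqmin : ∀ j, 1 ≤ j → qmin j
      = (1 / 2 ^ (j - 1)) * ∑ m ∈ Finset.range j,
          ((j - 1).choose m : ℝ) * q (m + 1) * (1 - Q (j - 1 - m)))
    (hqmax : ∀ j, 1 ≤ j → qmax j
      = (1 / 2 ^ (j - 1)) * ∑ m ∈ Finset.range j,
          ((j - 1).choose m : ℝ) * q (m + 1) * Q (j - 1 - m))
    (F : ℝ → ℝ) (hF : ∀ x, F x = ∑' j, q j * erlangCDF x j β) :
    (∀ x : ℝ, 0 ≤ x →
      1 - (1 - F x) ^ 2 = ∑' j, qmin j * erlangCDF x j (2 * β)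
      ∧ (F x) ^ 2 = ∑' j, qmax j * erlangCDF x j (2 * β))
    ∧ (∀ j, 0 ≤ qmin j) ∧ (∀ j, 0 ≤ qmax j)
    ∧ (∑' j, qmin j = 1) ∧ (∑' j, qmax j = 1) :=
  mixedErlang_order_statistics_general β q hq0 hq_nonneg hq_sum Q hQ qmin qmax hqmin0 hqmax0 hqmin
    hqmax F hF
end

section
/- For every d ≥ 2 and every u = (u_1,...,u_d) ∈ [0,1]^d, (1/2) ∏_{k=1}^d (2u_k − u_k^2) + (1/2) ∏_{k=1}^d u_k^2 = (∏_{k=1}^d u_k) · (1 + Σ_{k=1}^{⌊d/2⌋} Σ_{1≤j_1<···<j_{2k}≤d} (1−u_{j_1})(1−u_{j_2})···(1−u_{j_{2k}})); that is, the FGM copula generated by a comonotonic symmetric multivariate Bernoulli vector (I_1 = ··· = I_d, each Bernoulli(1/2)) is the extreme positive dependence (EPD) FGM copula whose parameters θ_J equal 1 for every subset J of even cardinality |J| ≥ 2 and 0 for every subset of odd cardinality. -/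
open Finset

/-- Theorem 5.5: the FGM copula generated by a comonotonic symmetric
multivariate Bernoulli vector is the extreme positive dependence (EPD) FGM copula,
whose parameters equal `1` for subsets of even cardinality `≥ 2` and `0` for subsets
of odd cardinality. -/
theorem epd_fgm_copula (d : ℕ) (hd : 2 ≤ d)
    (u : Fin d → ℝ) (hu : ∀ k, u k ∈ Set.Icc (0 : ℝ) 1) :
    (1 / 2) * ∏ k, (2 * u k - u k ^ 2) + (1 / 2) * ∏ k, u k ^ 2
      = (∏ k, u k) *
        (1 + ∑ J ∈ Finset.univ.filter
            (fun J : Finset (Fin d) => 2 ≤ J.card ∧ Even J.card),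
          ∏ j ∈ J, (1 - u j)) := by
  have h1 : ∀ k, 2 * u k - u k ^ 2 = u k * (1 + (1 - u k)) := fun k => by ring
  have h2 : ∀ k, u k ^ 2 = u k * (1 - (1 - u k)) := fun k => by ring
  have hA : ∏ k, (2 * u k - u k ^ 2) = (∏ k, u k) * ∏ k, (1 + (1 - u k)) := by
    rw [← Finset.prod_mul_distrib]; exact Finset.prod_congr rfl fun k _ => h1 k
  have hB : ∏ k, u k ^ 2 = (∏ k, u k) * ∏ k, (1 - (1 - u k)) := by
    rw [← Finset.prod_mul_distrib]; exact Finset.prod_congr rfl fun k _ => h2 k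

  have hp1 : ∏ k, (1 + (1 - u k)) = ∑ J : Finset (Fin d), ∏ j ∈ J, (1 - u j) := by
    have := Finset.prod_add (fun k : Fin d => (1 - u k)) (fun _ => (1:ℝ)) Finset.univ
    simpa [add_comm] using this
  have hp2 : ∏ k, (1 - (1 - u k))
      = ∑ J : Finset (Fin d), (-1 : ℝ) ^ J.card * ∏ j ∈ J, (1 - u j) := by
    have := Finset.prod_add (fun k : Fin d => -(1 - u k)) (fun _ => (1:ℝ)) Finset.univ
    simp only [Finset.prod_const_one, mul_one, Finset.powerset_univ] at this
    calc ∏ k, (1 - (1 - u k)) = ∏ k, (-(1 - u k) + 1) := by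
          apply Finset.prod_congr rfl; intro k _; ring
      _ = ∑ J : Finset (Fin d), ∏ j ∈ J, -(1 - u j) := this
      _ = ∑ J : Finset (Fin d), (-1 : ℝ) ^ J.card * ∏ j ∈ J, (1 - u j) := by
          apply Finset.sum_congr rfl; intro J _
          rw [← Finset.prod_const (-1 : ℝ), ← Finset.prod_mul_distrib]
          apply Finset.prod_congr rfl; intro j _; ring
  have key : (1/2 : ℝ) * ∏ k, (1 + (1 - u k)) + (1/2) * ∏ k, (1 - (1 - u k))
      = 1 + ∑ J ∈ Finset.univ.filter
          (fun J : Finset (Fin d) => 2 ≤ J.card ∧ Even J.card), ∏ j ∈ J, (1 - u j) := by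
    rw [hp1, hp2, Finset.mul_sum, Finset.mul_sum, ← Finset.sum_add_distrib]
    have hsplit : ∀ J : Finset (Fin d),
        (1/2 : ℝ) * ∏ j ∈ J, (1 - u j) + (1/2) * ((-1:ℝ) ^ J.card * ∏ j ∈ J, (1 - u j))
          = if Even J.card then ∏ j ∈ J, (1 - u j) else 0 := by
      intro J
      rcases Nat.even_or_odd J.card with h | h
      · rw [if_pos h, h.neg_one_pow]; ring
      · rw [if_neg (Nat.not_even_iff_odd.mpr h), h.neg_one_pow]; ring
    simp only [hsplit]
    rw [← Finset.sum_filter]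
    have hfe : (Finset.univ.filter (fun J : Finset (Fin d) => Even J.card))
        = insert (∅ : Finset (Fin d))
            (Finset.univ.filter (fun J : Finset (Fin d) => 2 ≤ J.card ∧ Even J.card)) := by
      ext J
      simp only [Finset.mem_filter, Finset.mem_univ, true_and, Finset.mem_insert]
      constructor
      · intro h
        rcases h with ⟨m, hm⟩
        by_cases hJ : J = ∅
        · exact Or.inl hJ
        · refine Or.inr ⟨?_, ⟨m, hm⟩⟩
          have : J.card ≠ 0 := fun h0 => hJ (Finset.card_eq_zero.mp h0)
          omega
      · rintro (rfl | ⟨_, h⟩)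
        · simp
        · exact h
    rw [hfe, Finset.sum_insert (by simp), Finset.prod_empty]
  rw [hA, hB, ← key]
  ring
end

section
/- Let I and I' be {0,1}^d-valued random vectors, and let X and X' each be obtained by the FGM construction with the same marginal cdfs F_1,...,F_d: X_k = (1−I_k)X^[1]_k + I_k X^[2]_k and X'_k = (1−I'_k)Y^[1]_k + I'_k Y^[2]_k, where X^[1]_k and Y^[1]_k have cdf 1−(1−F_k)^2, X^[2]_k and Y^[2]_k have cdf F_k^2, and in each construction the 2d+1 random elements (the Bernoulli vector and the 2d order-statistic components) are mutually independent. Suppose that E[φ(I)] ≤ E[φ(I')] for every supermodular function φ : ℝ^d → ℝ (I precedes I' in the supermodular order). Then E[ψ(X)] ≤ E[ψ(X')] for every bounded Borel-measurable supermodular function ψ : ℝ^d → ℝ. -/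
open MeasureTheory ProbabilityTheory

/-- A function `φ : ℝ^d → ℝ` is supermodular if
`φ(x ∨ y) + φ(x ∧ y) ≥ φ(x) + φ(y)` for all `x, y`. -/
def Supermodular {d : ℕ} (φ : (Fin d → ℝ) → ℝ) : Prop :=
  ∀ x y : Fin d → ℝ, φ x + φ y ≤ φ (x ⊔ y) + φ (x ⊓ y)


/-!
Let `ν k` be the law whose cdf is `F k` (it exists because `F k ^ 2` is a cdf). The minimum and the
maximum of an i.i.d. pair drawn from `ν k` have cdfs `1 - (1 - F k) ^ 2` and `F k ^ 2`, so they
have the laws of `X 0 k` and `X 1 k`. Conditioning on the independent Bernoulli vector therefore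
gives `E ψ(X) = E Φ(I)` with `Φ x = E ψ((1 - x k) min (W k) + x k max (W k))ₖ`, where the `W k` are
independent pairs of law `ν k ⊗ ν k`; the same `Φ` serves for `X'`. Since `t ↦ (1 - t) a + t b` is
monotone when `a ≤ b`, each integrand of `Φ` is supermodular, hence so is `Φ`, and the supermodular
order of `I` and `I'` applies to it.
-/

open Set Filter Topology

namespace Supermodular

variable {d : ℕ} {ψ : (Fin d → ℝ) → ℝ}

theorem comp_monotone (hψ : Supermodular ψ) {g : Fin d → ℝ → ℝ} (hg : ∀ k, Monotone (g k)) :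
    Supermodular fun x => ψ fun k => g k (x k) := by
  intro x y
  have hsup : (fun k => g k ((x ⊔ y) k)) = (fun k => g k (x k)) ⊔ fun k => g k (y k) :=
    funext fun k => (hg k).map_max
  have hinf : (fun k => g k ((x ⊓ y) k)) = (fun k => g k (x k)) ⊓ fun k => g k (y k) :=
    funext fun k => (hg k).map_min
  dsimp only
  rw [hsup, hinf]
  exact hψ _ _

theorem integral {α : Type*} [MeasurableSpace α] {μ : Measure α} {Ψ : α → (Fin d → ℝ) → ℝ}
    (hΨ : ∀ w, Supermodular (Ψ w)) (hint : ∀ x, Integrable (fun w => Ψ w x) μ) :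
    Supermodular fun x => ∫ w, Ψ w x ∂μ := by
  intro x y
  rw [← integral_add (hint x) (hint y), ← integral_add (hint _) (hint _)]
  exact integral_mono ((hint x).add (hint y)) ((hint _).add (hint _)) fun w => hΨ w x y

theorem integral_comp_lerp (hψsm : Supermodular ψ) (hψ : Measurable ψ) {C : ℝ}
    (hC : ∀ x, |ψ x| ≤ C) {α : Type*} [MeasurableSpace α] {μ : Measure α} [IsFiniteMeasure μ]
    {a b : α → Fin d → ℝ} (ha : Measurable a) (hb : Measurable b) (hab : ∀ w k, a w k ≤ b w k) :
    Supermodular fun x => ∫ w, ψ (fun k => (1 - x k) * a w k + x k * b w k) ∂μ := by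
  refine Supermodular.integral (fun w => hψsm.comp_monotone
    (g := fun k t => (1 - t) * a w k + t * b w k) fun k s t hst => ?_) fun x => ?_
  · nlinarith [hab w k]
  · exact Integrable.of_bound (hψ.comp (by fun_prop)).aestronglyMeasurable C
      (ae_of_all _ fun w => hC _)

end Supermodular

section OrderStatistics

variable (ν : Measure ℝ) [IsProbabilityMeasure ν]

theorem cdf_map_max (x : ℝ) :
    cdf ((ν.prod ν).map fun p => max p.1 p.2) x = cdf ν x ^ 2 := by
  have hpre : (fun p : ℝ × ℝ => max p.1 p.2) ⁻¹' Iic x = Iic x ×ˢ Iic x := by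
    ext p; simp [Prod.le_def]
  have : IsProbabilityMeasure ((ν.prod ν).map fun p => max p.1 p.2) :=
    Measure.isProbabilityMeasure_map (by fun_prop)
  rw [cdf_eq_real, map_measureReal_apply (by fun_prop) measurableSet_Iic, hpre,
    measureReal_prod_prod, cdf_eq_real, sq]

theorem cdf_map_min (x : ℝ) :
    cdf ((ν.prod ν).map fun p => min p.1 p.2) x = 1 - (1 - cdf ν x) ^ 2 := by
  have hpre : (fun p : ℝ × ℝ => min p.1 p.2) ⁻¹' Iic x = (Ioi x ×ˢ Ioi x)ᶜ := by
    ext p; simp [or_iff_not_imp_left]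
  have : IsProbabilityMeasure ((ν.prod ν).map fun p => min p.1 p.2) :=
    Measure.isProbabilityMeasure_map (by fun_prop)
  rw [cdf_eq_real, map_measureReal_apply (by fun_prop) measurableSet_Iic, hpre,
    probReal_compl_eq_one_sub (measurableSet_Ioi.prod measurableSet_Ioi),
    measureReal_prod_prod, ← compl_Iic, probReal_compl_eq_one_sub measurableSet_Iic,
    cdf_eq_real, sq]

end OrderStatistics

theorem exists_cdf_eq_sqrt_cdf (μ : Measure ℝ) [IsProbabilityMeasure μ] :
    ∃ ν : Measure ℝ, IsProbabilityMeasure ν ∧ ∀ x, cdf ν x = √(cdf μ x) := by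
  let G : StieltjesFunction ℝ :=
    { toFun := fun x => √(cdf μ x)
      mono' := fun _ _ hab => Real.sqrt_le_sqrt (monotone_cdf μ hab)
      right_continuous' := fun x =>
        Real.continuous_sqrt.continuousAt.comp_continuousWithinAt ((cdf μ).right_continuous x) }
  have hbot : Tendsto G atBot (𝓝 0) := by
    have h := (Real.continuous_sqrt.tendsto 0).comp (tendsto_cdf_atBot μ)
    rwa [Real.sqrt_zero] at h
  have htop : Tendsto G atTop (𝓝 1) := by
    have h := (Real.continuous_sqrt.tendsto 1).comp (tendsto_cdf_atTop μ)
    rwa [Real.sqrt_one] at h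
  refine ⟨G.measure, ⟨by simp [G.measure_univ hbot htop]⟩, fun x => ?_⟩
  rw [cdf_measure_stieltjesFunction G hbot htop]

section Laws

variable {Ω : Type*} [MeasurableSpace Ω] {P : Measure Ω} [IsProbabilityMeasure P]

theorem cdf_map_eq_toReal {Z : Ω → ℝ} (hZ : Measurable Z) (x : ℝ) :
    cdf (P.map Z) x = (P {ω | Z ω ≤ x}).toReal := by
  have := Measure.isProbabilityMeasure_map (μ := P) hZ.aemeasurable
  rw [cdf_eq_real, map_measureReal_apply hZ measurableSet_Iic]
  rfl

theorem exists_cdf_eq_of_cdf_min_max {G : ℝ → ℝ} {Zmin Zmax : Ω → ℝ} (hmax : Measurable Zmax)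
    (hminG : ∀ x, (P {ω | Zmin ω ≤ x}).toReal = 1 - (1 - G x) ^ 2)
    (hmaxG : ∀ x, (P {ω | Zmax ω ≤ x}).toReal = G x ^ 2) :
    ∃ ν : Measure ℝ, IsProbabilityMeasure ν ∧ ∀ x, cdf ν x = G x := by
  have := Measure.isProbabilityMeasure_map (μ := P) hmax.aemeasurable
  obtain ⟨ν, hν, hνcdf⟩ := exists_cdf_eq_sqrt_cdf (P.map Zmax)
  refine ⟨ν, hν, fun x => ?_⟩
  have hG : 0 ≤ G x := by nlinarith [hminG x ▸ ENNReal.toReal_nonneg (a := P {ω | Zmin ω ≤ x})]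
  rw [hνcdf, cdf_map_eq_toReal hmax, hmaxG, Real.sqrt_sq hG]

variable {Z : Ω → ℝ} {ν : Measure ℝ} [IsProbabilityMeasure ν] {G : ℝ → ℝ}

theorem map_eq_map_min_of_cdf (hZ : Measurable Z) (hν : ∀ x, cdf ν x = G x)
    (hZG : ∀ x, (P {ω | Z ω ≤ x}).toReal = 1 - (1 - G x) ^ 2) :
    P.map Z = (ν.prod ν).map fun p => min p.1 p.2 := by
  have := Measure.isProbabilityMeasure_map (μ := P) hZ.aemeasurable
  have := Measure.isProbabilityMeasure_map (μ := ν.prod ν) (f := fun p => min p.1 p.2)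
    (by fun_prop)
  refine Measure.eq_of_cdf _ _ (StieltjesFunction.ext fun x => ?_)
  rw [cdf_map_eq_toReal hZ, hZG, cdf_map_min, hν]

theorem map_eq_map_max_of_cdf (hZ : Measurable Z) (hν : ∀ x, cdf ν x = G x)
    (hZG : ∀ x, (P {ω | Z ω ≤ x}).toReal = G x ^ 2) :
    P.map Z = (ν.prod ν).map fun p => max p.1 p.2 := by
  have := Measure.isProbabilityMeasure_map (μ := P) hZ.aemeasurable
  have := Measure.isProbabilityMeasure_map (μ := ν.prod ν) (f := fun p => max p.1 p.2)
    (by fun_prop)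
  refine Measure.eq_of_cdf _ _ (StieltjesFunction.ext fun x => ?_)
  rw [cdf_map_eq_toReal hZ, hZG, cdf_map_max, hν]

end Laws

theorem integral_comp_pi_of_measurePreserving {ι : Type*} [Fintype ι] {α : ι → Type*}
    [∀ i, MeasurableSpace (α i)] {β : Type*} [MeasurableSpace β] {μ : ∀ i, Measure (α i)}
    {ρ : ι → Measure β} [∀ i, SigmaFinite (ρ i)] {f : ∀ i, α i → β}
    (hf : ∀ i, MeasurePreserving (f i) (μ i) (ρ i)) {ψ : (ι → β) → ℝ} (hψ : Measurable ψ) :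
    ∫ w, ψ (fun i => f i (w i)) ∂Measure.pi μ = ∫ v, ψ v ∂Measure.pi ρ := by
  rw [← (measurePreserving_pi μ ρ hf).map_eq,
    integral_map (measurePreserving_pi μ ρ hf).aemeasurable hψ.aestronglyMeasurable]

theorem fin_two_lerp_eq_apply (j : Fin 2) (v : Fin 2 → ℝ) :
    (1 - ((j : ℕ) : ℝ)) * v 0 + ((j : ℕ) : ℝ) * v 1 = v j := by
  fin_cases j <;> simp

section FGM

variable {Ω : Type*} [MeasurableSpace Ω] {P : Measure Ω} [IsProbabilityMeasure P] {d : ℕ}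
  {I : Ω → Fin d → Fin 2} {X : Fin 2 → Fin d → Ω → ℝ}

theorem map_fgmFamily_eq_prod (hI : Measurable I) (hX : ∀ j k, Measurable (X j k))
    (hIndep : iIndepFun (fgmFamily d I X) P) :
    P.map (fun ω => ((fun k j => X j k ω), I ω))
      = (Measure.pi fun k => Measure.pi fun j => P.map (X j k)).prod (P.map I) := by
  have hfam : ∀ o, Measurable (fgmFamily d I X o)
    | none => hI
    | some p => hX p.2 p.1
  have hjoint := (iIndepFun_iff_map_fun_eq_pi_map fun o => (hfam o).aemeasurable).1 hIndep
  have hsplit := Measure.pi_map_piOptionEquivProd fun o => P.map (fgmFamily d I X o)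
  rw [← hjoint, MeasurableEquiv.map_apply_eq_iff_map_symm_apply_eq, MeasurableEquiv.symm_symm,
    Measure.map_map (MeasurableEquiv.measurable _) (by fun_prop)] at hsplit
  have (j : Fin 2) (k : Fin d) : IsProbabilityMeasure (P.map (X j k)) :=
    Measure.isProbabilityMeasure_map (hX j k).aemeasurable
  have hcurry := Measure.infinitePi_map_curry fun k j => P.map (X j k)
  simp only [Measure.infinitePi_eq_pi] at hcurry
  calc P.map (fun ω => ((fun k j => X j k ω), I ω))
      = (P.map fun ω => ((fun p : Fin d × Fin 2 => X p.2 p.1 ω), I ω)).map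
          (Prod.map (MeasurableEquiv.curry (Fin d) (Fin 2) ℝ) id) := by
        rw [Measure.map_map (by fun_prop) (by fun_prop)]
        rfl
    _ = ((Measure.pi fun p : Fin d × Fin 2 => P.map (X p.2 p.1)).prod (P.map I)).map
          (Prod.map (MeasurableEquiv.curry (Fin d) (Fin 2) ℝ) id) :=
        congrArg _ hsplit.symm
    _ = _ := by
        rw [← Measure.map_prod_map _ _ (MeasurableEquiv.measurable _) measurable_id, hcurry,
          Measure.map_id]

theorem integral_fgm_eq_integral_minMax (hI : Measurable I) (hX : ∀ j k, Measurable (X j k))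
    (hIndep : iIndepFun (fgmFamily d I X) P)
    {ν : Fin d → Measure ℝ} [∀ k, IsProbabilityMeasure (ν k)]
    (hmin : ∀ k, P.map (X 0 k) = ((ν k).prod (ν k)).map fun p => min p.1 p.2)
    (hmax : ∀ k, P.map (X 1 k) = ((ν k).prod (ν k)).map fun p => max p.1 p.2)
    {ψ : (Fin d → ℝ) → ℝ} (hψ : Measurable ψ) {C : ℝ} (hC : ∀ x, |ψ x| ≤ C) :
    ∫ ω, ψ (fun k => (1 - ((I ω k : ℕ) : ℝ)) * X 0 k ω + ((I ω k : ℕ) : ℝ) * X 1 k ω) ∂P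
      = ∫ ω, ∫ w, ψ (fun k => (1 - ((I ω k : ℕ) : ℝ)) * min (w k).1 (w k).2
          + ((I ω k : ℕ) : ℝ) * max (w k).1 (w k).2) ∂Measure.pi (fun k => (ν k).prod (ν k)) ∂P := by
  have (j : Fin 2) (k : Fin d) : IsProbabilityMeasure (P.map (X j k)) :=
    Measure.isProbabilityMeasure_map (hX j k).aemeasurable
  have hcoupling (j : Fin 2) (k : Fin d) : MeasurePreserving
      (fun p : ℝ × ℝ => (1 - ((j : ℕ) : ℝ)) * min p.1 p.2 + ((j : ℕ) : ℝ) * max p.1 p.2)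
      ((ν k).prod (ν k)) (P.map (X j k)) := by
    fin_cases j
    · simpa using ⟨by fun_prop, (hmin k).symm⟩
    · simpa using ⟨by fun_prop, (hmax k).symm⟩
  have hinner (i : Fin d → Fin 2) :
      ∫ z, ψ (fun k => z k (i k)) ∂Measure.pi (fun k => Measure.pi fun j => P.map (X j k))
        = ∫ w, ψ (fun k => (1 - ((i k : ℕ) : ℝ)) * min (w k).1 (w k).2
          + ((i k : ℕ) : ℝ) * max (w k).1 (w k).2) ∂Measure.pi (fun k => (ν k).prod (ν k)) :=
    (integral_comp_pi_of_measurePreserving (f := fun k (v : Fin 2 → ℝ) => v (i k))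
      (fun k => measurePreserving_eval _ (i k)) hψ).trans
      (integral_comp_pi_of_measurePreserving (fun k => hcoupling (i k) k) hψ).symm
  have hH : Measurable fun q : (Fin d → Fin 2 → ℝ) × (Fin d → Fin 2) => ψ fun k => q.1 k (q.2 k) :=
    hψ.comp (measurable_from_prod_countable_left fun i =>
      measurable_pi_lambda _ fun k => (measurable_pi_apply (i k)).comp (measurable_pi_apply k))
  calc _ = ∫ q, ψ (fun k => q.1 k (q.2 k)) ∂P.map (fun ω => ((fun k j => X j k ω), I ω)) := by
        rw [integral_map (by fun_prop) hH.aestronglyMeasurable]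
        exact integral_congr_ae (ae_of_all _ fun ω =>
          congrArg ψ (funext fun k => fin_two_lerp_eq_apply (I ω k) fun j => X j k ω))
    _ = ∫ ω, ∫ z, ψ (fun k => z k (I ω k))
          ∂Measure.pi (fun k => Measure.pi fun j => P.map (X j k)) ∂P := by
        rw [map_fgmFamily_eq_prod hI hX hIndep, integral_prod_symm _
          (Integrable.of_bound hH.aestronglyMeasurable C (ae_of_all _ fun q => hC _)),
          integral_map hI.aemeasurable (measurable_of_countable _).aestronglyMeasurable]
    _ = _ := by simp only [hinner]

end FGM

/-- Theorem 5.3: preservation of the supermodular order by the FGM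
construction: if the Bernoulli vectors satisfy `I ≼_sm I'`, then the corresponding FGM
random vectors (with the same marginal cdfs `F_1, …, F_d`) satisfy `X ≼_sm X'`. -/
theorem fgm_supermodular_order {Ω : Type*} [MeasurableSpace Ω]
    (P : Measure Ω) [IsProbabilityMeasure P] (d : ℕ) (F : Fin d → ℝ → ℝ)
    (I I' : Ω → Fin d → Fin 2) (X Y : Fin 2 → Fin d → Ω → ℝ)
    (hI : Measurable I) (hI' : Measurable I')
    (hX : ∀ j k, Measurable (X j k)) (hY : ∀ j k, Measurable (Y j k))
    (hIndep : iIndepFun (fgmFamily d I X) P)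
    (hIndep' : iIndepFun (fgmFamily d I' Y) P)
    (hXcdf_min : ∀ k x, (P {ω | X 0 k ω ≤ x}).toReal = 1 - (1 - F k x) ^ 2)
    (hXcdf_max : ∀ k x, (P {ω | X 1 k ω ≤ x}).toReal = (F k x) ^ 2)
    (hYcdf_min : ∀ k x, (P {ω | Y 0 k ω ≤ x}).toReal = 1 - (1 - F k x) ^ 2)
    (hYcdf_max : ∀ k x, (P {ω | Y 1 k ω ≤ x}).toReal = (F k x) ^ 2)
    (hsm : ∀ φ : (Fin d → ℝ) → ℝ, Supermodular φ →
      ∫ ω, φ (fun k => ((I ω k : ℕ) : ℝ)) ∂P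
        ≤ ∫ ω, φ (fun k => ((I' ω k : ℕ) : ℝ)) ∂P) :
    ∀ ψ : (Fin d → ℝ) → ℝ, Measurable ψ → (∃ C : ℝ, ∀ x, |ψ x| ≤ C) →
      Supermodular ψ →
      ∫ ω, ψ (fun k =>
          (1 - ((I ω k : ℕ) : ℝ)) * X 0 k ω + ((I ω k : ℕ) : ℝ) * X 1 k ω) ∂P
        ≤ ∫ ω, ψ (fun k =>
            (1 - ((I' ω k : ℕ) : ℝ)) * Y 0 k ω + ((I' ω k : ℕ) : ℝ) * Y 1 k ω) ∂P := by
  rintro ψ hψ ⟨C, hC⟩ hψsm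
  choose ν hν hνF using fun k =>
    exists_cdf_eq_of_cdf_min_max (hX 1 k) (hXcdf_min k) (hXcdf_max k)
  rw [integral_fgm_eq_integral_minMax hI hX hIndep
      (fun k => map_eq_map_min_of_cdf (hX 0 k) (hνF k) (hXcdf_min k))
      (fun k => map_eq_map_max_of_cdf (hX 1 k) (hνF k) (hXcdf_max k)) hψ hC,
    integral_fgm_eq_integral_minMax hI' hY hIndep'
      (fun k => map_eq_map_min_of_cdf (hY 0 k) (hνF k) (hYcdf_min k))
      (fun k => map_eq_map_max_of_cdf (hY 1 k) (hνF k) (hYcdf_max k)) hψ hC]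
  exact hsm _ (hψsm.integral_comp_lerp hψ hC (by fun_prop) (by fun_prop) fun w k => min_le_max)
end
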